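/- arXiv:1507.02624 — 6 statements merged into one kernel-verified Lean document; each statement's English description precedes it below -/
import Mathlib

section
/- Let n ≥ 2, let C be a cone in ℝⁿ, and suppose C is not contained in the zero set of any nonzero homogeneous harmonic polynomial on ℝⁿ. If f ∈ L¹(σ) satisfies ∫_{S^{n-1}} exp(-i ⟪ξ, η⟫) f(η) dσ(η) = 0 for every ξ ∈ C, then f = 0 σ-almost everywhere. -/
open MeasureTheory Pointwise

/-- The surface measure on the unit sphere `S^{n-1}` in `ℝⁿ`. -/
noncomputable def sphereMeasure (n : ℕ) : Measure (EuclideanSpace ℝ (Fin n)) :=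
  (μH[(n : ℝ) - 1]).restrict (Metric.sphere (0 : EuclideanSpace ℝ (Fin n)) 1)

/-- `P` is a homogeneous harmonic polynomial of degree `l` on `ℝⁿ`. -/
def IsHomHarmonic {n : ℕ} (P : MvPolynomial (Fin n) ℝ) (l : ℕ) : Prop :=
  P.IsHomogeneous l ∧ ∑ i : Fin n, MvPolynomial.pderiv i (MvPolynomial.pderiv i P) = 0

/-! Differentiating `t ↦ ∫ exp (-i t ⟪ξ, η⟫) f(η) dσ(η)` at `t = 0` (the cone contains `t • ξ`)
shows that all moments `∫ ⟪ξ, η⟫ ^ k f(η) dσ(η)` vanish for `ξ ∈ C`. For real `g`, the function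
`ξ ↦ ∫ ⟪ξ, η⟫ ^ k g(η) dσ(η)` is a homogeneous polynomial `Q k` of degree `k`, and because
`‖η‖ = 1` on the sphere, `Δ (Q k) = k (k - 1) Q (k - 2)`. By strong induction every `Q k` is then
harmonic and vanishes on `C`, hence is zero. Reading off coefficients, every monomial integrates to
zero against `g`; by Stone–Weierstrass so does every continuous function, and `g = 0` a.e.
This applies to the real and imaginary parts of `f`. -/

open MvPolynomial Finset Complex

lemma MeasureTheory.Integrable.continuous_mul_of_ae_mem_isCompact {X 𝕜 : Type*}
    [TopologicalSpace X] [MeasurableSpace X] [OpensMeasurableSpace X] [RCLike 𝕜] {μ : Measure X}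
    {K : Set X} (hK : IsCompact K) (hμK : ∀ᵐ x ∂μ, x ∈ K) {φ g : X → 𝕜} (hφ : Continuous φ)
    (hg : Integrable g μ) : Integrable (fun x => φ x * g x) μ := by
  obtain ⟨B, hB⟩ := hK.exists_bound_of_continuousOn hφ.continuousOn
  exact hg.bdd_mul hφ.aestronglyMeasurable (hμK.mono hB)

section FourierToMoments

variable {α : Type*} [MeasurableSpace α] {μ : Measure α} {f : α → ℂ} {c : α → ℝ} {B : ℝ}

lemma norm_exp_neg_I_mul_ofReal (r : ℝ) : ‖exp (-I * r)‖ = 1 := by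
  rw [show -I * r = ((-r : ℝ) : ℂ) * I by push_cast; ring, norm_exp_ofReal_mul_I]

lemma hasDerivAt_integral_ofReal_pow_mul_exp_mul (hf : Integrable f μ)
    (hc : AEStronglyMeasurable c μ) (hcB : ∀ᵐ x ∂μ, |c x| ≤ B) (j : ℕ) (t : ℝ) :
    HasDerivAt (fun s : ℝ => ∫ x, (c x : ℂ) ^ j * exp (-I * ((s * c x : ℝ) : ℂ)) * f x ∂μ)
      (∫ x, -I * ((c x : ℂ) ^ (j + 1) * exp (-I * ((t * c x : ℝ) : ℂ)) * f x) ∂μ) t := by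
  have hmeas : ∀ (m : ℕ) (s : ℝ), AEStronglyMeasurable
      (fun x => (c x : ℂ) ^ m * exp (-I * ((s * c x : ℝ) : ℂ)) * f x) μ := by
    have := hf.1
    fun_prop
  have hbound : ∀ m : ℕ, ∀ᵐ x ∂μ, ∀ s : ℝ,
      ‖(c x : ℂ) ^ m * exp (-I * ((s * c x : ℝ) : ℂ)) * f x‖ ≤ B ^ m * ‖f x‖ := by
    intro m
    filter_upwards [hcB] with x hx s
    rw [norm_mul, norm_mul, norm_pow, norm_real, Real.norm_eq_abs, norm_exp_neg_I_mul_ofReal,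
      mul_one]
    gcongr
  refine (hasDerivAt_integral_of_dominated_loc_of_deriv_le
    (F' := fun s x => -I * ((c x : ℂ) ^ (j + 1) * exp (-I * ((s * c x : ℝ) : ℂ)) * f x))
    Filter.univ_mem (.of_forall fun s => hmeas j s)
    ((hf.norm.const_mul _).mono' (hmeas j t) ((hbound j).mono fun x hx => hx t))
    ((hmeas (j + 1) t).const_mul _) ?_ (hf.norm.const_mul (B ^ (j + 1))) ?_).2
  · filter_upwards [hbound (j + 1)] with x hx s _
    rw [norm_mul, norm_neg, norm_I, one_mul]
    exact hx s
  · refine .of_forall fun x s _ => ?_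
    have := (((hasDerivAt_id' s).mul_const (c x)).ofReal_comp.const_mul (-I)).cexp
    exact ((this.const_mul ((c x : ℂ) ^ j)).mul_const (f x)).congr_deriv (by push_cast; ring)

lemma integral_ofReal_pow_mul_eq_zero_of_integral_exp_mul_eq_zero (hf : Integrable f μ)
    (hc : AEStronglyMeasurable c μ) (hcB : ∀ᵐ x ∂μ, |c x| ≤ B)
    (h : ∀ t : ℝ, ∫ x, exp (-I * ((t * c x : ℝ) : ℂ)) * f x ∂μ = 0) (k : ℕ) :
    ∫ x, (c x : ℂ) ^ k * f x ∂μ = 0 := by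
  suffices H : ∀ (j : ℕ) (t : ℝ),
      ∫ x, (c x : ℂ) ^ j * exp (-I * ((t * c x : ℝ) : ℂ)) * f x ∂μ = 0 by
    simpa using H k 0
  intro j
  induction j with
  | zero => simpa using h
  | succ j ih =>
    intro t
    have hderiv := hasDerivAt_integral_ofReal_pow_mul_exp_mul hf hc hcB j t
    simp only [ih] at hderiv
    have := hderiv.unique (hasDerivAt_const t 0)
    rwa [integral_const_mul, mul_eq_zero, or_iff_right (neg_ne_zero.mpr I_ne_zero)] at this

lemma integral_ofReal_mul_eq_zero_iff (h : Integrable (fun x => (c x : ℂ) * f x) μ) :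
    ∫ x, (c x : ℂ) * f x ∂μ = 0 ↔ ∫ x, c x * (f x).re ∂μ = 0 ∧ ∫ x, c x * (f x).im ∂μ = 0 := by
  have hre := integral_re h
  have him := integral_im h
  simp only [RCLike.re_to_complex, RCLike.im_to_complex, re_ofReal_mul, im_ofReal_mul] at hre him
  rw [Complex.ext_iff, hre, him, zero_re, zero_im]

end FourierToMoments

section StoneWeierstrass

variable {ι : Type*} [Fintype ι]

lemma exists_mvPolynomial_near_of_continuous {K : Set (EuclideanSpace ℝ ι)} (hK : IsCompact K)
    {φ : EuclideanSpace ℝ ι → ℝ} (hφ : Continuous φ) {ε : ℝ} (hε : 0 < ε) :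
    ∃ p : MvPolynomial ι ℝ, ∀ x ∈ K, |eval (fun i => x i) p - φ x| < ε := by
  have : CompactSpace K := isCompact_iff_compactSpace.mp hK
  let coord : ι → C(K, ℝ) := fun i => ⟨fun x => (x : EuclideanSpace ℝ ι) i, by fun_prop⟩
  have heval (p : MvPolynomial ι ℝ) (x : K) :
      aeval (R := ℝ) coord p x = eval (fun i => (x : EuclideanSpace ℝ ι) i) p := by
    rw [← ContinuousMap.evalAlgHom_apply ℝ ℝ x, ← AlgHom.comp_apply, comp_aeval]
    rfl
  have hsep : (aeval (R := ℝ) coord).range.SeparatesPoints := by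
    intro x y hxy
    obtain ⟨i, hi⟩ : ∃ i, (x : EuclideanSpace ℝ ι) i ≠ (y : EuclideanSpace ℝ ι) i := by
      by_contra! h
      exact hxy (Subtype.ext (PiLp.ext h))
    exact ⟨coord i, ⟨coord i, ⟨X i, aeval_X coord i⟩, rfl⟩, hi⟩
  obtain ⟨⟨_, p, rfl⟩, hp⟩ := ContinuousMap.exists_mem_subalgebra_near_continuous_of_separatesPoints
    _ hsep (fun x : K => φ x) (by fun_prop) ε hε
  exact ⟨p, fun x hx => by simpa [heval] using hp ⟨x, hx⟩⟩

variable {μ : Measure (EuclideanSpace ℝ ι)} {K : Set (EuclideanSpace ℝ ι)}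
  {g : EuclideanSpace ℝ ι → ℝ}

lemma integral_mul_eq_zero_of_forall_integral_eval_mul_eq_zero (hK : IsCompact K)
    (hμK : ∀ᵐ x ∂μ, x ∈ K) (hg : Integrable g μ)
    (h : ∀ p : MvPolynomial ι ℝ, ∫ x, eval (fun i => x i) p * g x ∂μ = 0)
    {φ : EuclideanSpace ℝ ι → ℝ} (hφ : Continuous φ) : ∫ x, φ x * g x ∂μ = 0 := by
  refine eq_of_forall_dist_le fun ε hε => ?_
  set c := ∫ x, ‖g x‖ ∂μ
  have hc : 0 ≤ c := integral_nonneg fun _ => norm_nonneg _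
  obtain ⟨p, hp⟩ :=
    exists_mvPolynomial_near_of_continuous hK hφ (div_pos hε (by linarith : 0 < c + 1))
  have hpoly : Continuous fun x : EuclideanSpace ℝ ι => eval (fun i => x i) p :=
    (continuous_eval p).comp (by fun_prop)
  calc dist (∫ x, φ x * g x ∂μ) 0
      = ‖∫ x, (eval (fun i => x i) p - φ x) * g x ∂μ‖ := by
        simp_rw [sub_mul]
        rw [integral_sub (hg.continuous_mul_of_ae_mem_isCompact hK hμK hpoly)
          (hg.continuous_mul_of_ae_mem_isCompact hK hμK hφ), h, zero_sub, norm_neg,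
          dist_zero_right]
    _ ≤ ∫ x, ε / (c + 1) * ‖g x‖ ∂μ := by
        refine norm_integral_le_of_norm_le (hg.norm.const_mul _) ?_
        filter_upwards [hμK] with x hx
        rw [norm_mul]
        exact mul_le_mul_of_nonneg_right (hp x hx).le (norm_nonneg _)
    _ = ε / (c + 1) * c := integral_const_mul _ _
    _ ≤ ε := by
        rw [div_mul_eq_mul_div, div_le_iff₀ (by linarith)]
        nlinarith

lemma ae_eq_zero_of_forall_integral_eval_mul_eq_zero (hK : IsCompact K)
    (hμK : ∀ᵐ x ∂μ, x ∈ K) (hg : Integrable g μ)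
    (h : ∀ p : MvPolynomial ι ℝ, ∫ x, eval (fun i => x i) p * g x ∂μ = 0) : g =ᵐ[μ] 0 :=
  ae_eq_zero_of_integral_contDiff_smul_eq_zero hg.locallyIntegrable fun _ hφ _ =>
    integral_mul_eq_zero_of_forall_integral_eval_mul_eq_zero hK hμK hg h hφ.continuous

end StoneWeierstrass

namespace MvPolynomial

variable {σ R : Type*} [CommSemiring R]

lemma eval_eq_sum_of_support_subset {p : MvPolynomial σ R} {S : Finset (σ →₀ ℕ)}
    (h : p.support ⊆ S) (x : σ → R) :
    eval x p = ∑ d ∈ S, coeff d p * d.prod fun i e => x i ^ e := by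
  rw [eval_eq, Finset.sum_subset h fun d _ hd => by rw [notMem_support_iff.mp hd, zero_mul]]
  rfl

variable [Fintype σ]

noncomputable def laplacian (p : MvPolynomial σ R) : MvPolynomial σ R :=
  ∑ i, pderiv i (pderiv i p)

lemma coeff_laplacian (p : MvPolynomial σ R) (m : σ →₀ ℕ) :
    coeff m (laplacian p) = ∑ i, coeff (m + Finsupp.single i 2) p * ((m i + 2) * (m i + 1)) := by
  simp only [laplacian, coeff_sum, coeff_pderiv, add_assoc, ← Finsupp.single_add,
    Finsupp.add_apply, Finsupp.single_eq_same]
  refine Finset.sum_congr rfl fun i _ => ?_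
  push_cast
  ring

lemma pderiv_sum_smul_X (a : σ → R) (i : σ) :
    pderiv i (∑ j, a j • X j : MvPolynomial σ R) = C (a i) := by
  classical
  simp [smul_eq_C_mul, pderiv_X, Pi.single_apply]

lemma laplacian_sum_smul_X_pow (a : σ → R) (k : ℕ) :
    laplacian ((∑ i, a i • X i : MvPolynomial σ R) ^ k)
      = C ((k * (k - 1) : ℕ) * ∑ i, a i ^ 2) * (∑ i, a i • X i) ^ (k - 2) := by
  simp only [laplacian, pderiv_pow, pderiv_mul, pderiv_sum_smul_X, pderiv_C, mul_zero, add_zero,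
    Derivation.map_natCast, zero_mul, zero_add]
  rw [Nat.sub_sub, map_mul, map_sum, Finset.mul_sum, Finset.sum_mul]
  refine Finset.sum_congr rfl fun i _ => ?_
  simp only [map_pow, Nat.cast_mul, map_mul, map_natCast]
  ring

end MvPolynomial

section MomentPolynomial

variable {ι : Type*} [Fintype ι]

noncomputable def innerPoly (η : EuclideanSpace ℝ ι) : MvPolynomial ι ℝ :=
  ∑ i, η i • X i

lemma eval_innerPoly_pow (ξ η : EuclideanSpace ℝ ι) (k : ℕ) :
    eval (fun i => ξ i) (innerPoly η ^ k) = inner ℝ ξ η ^ k := by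
  simp [innerPoly, PiLp.inner_apply, mul_comm]

lemma coeff_innerPoly_pow (η : EuclideanSpace ℝ ι) (d : ι →₀ ℕ) (k : ℕ) :
    coeff d (innerPoly η ^ k)
      = if (d.sum fun _ m => m) = k then d.multinomial * d.prod (fun i m => η i ^ m) else 0 :=
  coeff_linearCombination_X_pow_of_fintype _ d k

lemma continuous_coeff_innerPoly_pow (d : ι →₀ ℕ) (k : ℕ) :
    Continuous fun η : EuclideanSpace ℝ ι => coeff d (innerPoly η ^ k) := by
  simp only [coeff_innerPoly_pow, Finsupp.prod]
  split_ifs <;> fun_prop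

lemma laplacian_innerPoly_pow (η : EuclideanSpace ℝ ι) (k : ℕ) :
    laplacian (innerPoly η ^ k) = C ((k * (k - 1) : ℕ) * ‖η‖ ^ 2) * innerPoly η ^ (k - 2) := by
  rw [innerPoly, laplacian_sum_smul_X_pow, EuclideanSpace.norm_sq_eq]
  simp

variable [DecidableEq ι] {μ : Measure (EuclideanSpace ℝ ι)} {g : EuclideanSpace ℝ ι → ℝ}

/-- The polynomial `Q k` above, `ξ ↦ ∫ ⟪ξ, η⟫ ^ k g(η) dμ(η)`, defined through its coefficients. -/
noncomputable def momentPoly (μ : Measure (EuclideanSpace ℝ ι)) (g : EuclideanSpace ℝ ι → ℝ)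
    (k : ℕ) : MvPolynomial ι ℝ :=
  ∑ d ∈ finsuppAntidiag univ k, monomial d (∫ η, coeff d (innerPoly η ^ k) * g η ∂μ)

lemma coeff_momentPoly (d : ι →₀ ℕ) (k : ℕ) :
    coeff d (momentPoly μ g k) = ∫ η, coeff d (innerPoly η ^ k) * g η ∂μ := by
  rw [momentPoly, coeff_sum]
  simp only [coeff_monomial]
  rw [sum_ite_eq']
  split_ifs with hd
  · rfl
  · have hdk : (d.sum fun _ m => m) ≠ k := fun h =>
      hd (mem_finsuppAntidiag'.mpr ⟨h, subset_univ _⟩)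
    simp [coeff_innerPoly_pow, hdk]

lemma isHomogeneous_momentPoly (μ : Measure (EuclideanSpace ℝ ι)) (g : EuclideanSpace ℝ ι → ℝ)
    (k : ℕ) : (momentPoly μ g k).IsHomogeneous k :=
  IsHomogeneous.sum _ _ _ fun _ hd =>
    isHomogeneous_monomial _ (mem_finsuppAntidiag'.mp hd).1

variable (hμ : ∀ᵐ η ∂μ, η ∈ Metric.sphere (0 : EuclideanSpace ℝ ι) 1) (hg : Integrable g μ)
include hμ hg

lemma eval_momentPoly (ξ : EuclideanSpace ℝ ι) (k : ℕ) :
    eval (fun i => ξ i) (momentPoly μ g k) = ∫ η, inner ℝ ξ η ^ k * g η ∂μ := by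
  have hsupp (η : EuclideanSpace ℝ ι) : (innerPoly η ^ k).support ⊆ finsuppAntidiag univ k := by
    intro d hd
    refine mem_finsuppAntidiag'.mpr ⟨?_, subset_univ _⟩
    by_contra hdk
    simp [coeff_innerPoly_pow, hdk] at hd
  calc eval (fun i => ξ i) (momentPoly μ g k)
      = ∑ d ∈ finsuppAntidiag univ k,
          ∫ η, coeff d (innerPoly η ^ k) * (d.prod fun i e => ξ i ^ e) * g η ∂μ := by
        simp only [momentPoly, map_sum, eval_monomial]
        refine sum_congr rfl fun d _ => ?_
        rw [← integral_mul_const]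
        congr 1 with η
        ring
    _ = ∫ η, eval (fun i => ξ i) (innerPoly η ^ k) * g η ∂μ := by
        rw [← integral_finsetSum _ fun d _ => ?_]
        · simp only [eval_eq_sum_of_support_subset (hsupp _), sum_mul]
        · exact hg.continuous_mul_of_ae_mem_isCompact (isCompact_sphere 0 1) hμ
            ((continuous_coeff_innerPoly_pow d k).mul continuous_const)
    _ = ∫ η, inner ℝ ξ η ^ k * g η ∂μ := by simp only [eval_innerPoly_pow]

lemma laplacian_momentPoly (k : ℕ) :
    laplacian (momentPoly μ g k) = ((k * (k - 1) : ℕ) : ℝ) • momentPoly μ g (k - 2) := by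
  ext d
  calc coeff d (laplacian (momentPoly μ g k))
      = ∫ η, coeff d (laplacian (innerPoly η ^ k)) * g η ∂μ := by
        simp only [coeff_laplacian, coeff_momentPoly, sum_mul]
        rw [integral_finsetSum _ fun i _ => ?_]
        · refine sum_congr rfl fun i _ => ?_
          rw [← integral_mul_const]
          congr 1 with η
          ring
        · exact hg.continuous_mul_of_ae_mem_isCompact (isCompact_sphere 0 1) hμ
            ((continuous_coeff_innerPoly_pow _ k).mul continuous_const)
    _ = ∫ η, ((k * (k - 1) : ℕ) : ℝ) * (coeff d (innerPoly η ^ (k - 2)) * g η) ∂μ := by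
        refine integral_congr_ae ?_
        filter_upwards [hμ] with η hη
        rw [mem_sphere_zero_iff_norm] at hη
        simp only [laplacian_innerPoly_pow, coeff_C_mul, hη]
        ring
    _ = coeff d (((k * (k - 1) : ℕ) : ℝ) • momentPoly μ g (k - 2)) := by
        rw [integral_const_mul, coeff_smul, coeff_momentPoly, smul_eq_mul]

variable {C : Set (EuclideanSpace ℝ ι)}
  (hharm : ∀ (k : ℕ) (P : MvPolynomial ι ℝ), P.IsHomogeneous k → laplacian P = 0 →
    (∀ x ∈ C, eval (fun i => x i) P = 0) → P = 0)
  (hmom : ∀ ξ ∈ C, ∀ k : ℕ, ∫ η, inner ℝ ξ η ^ k * g η ∂μ = 0)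
include hharm hmom

lemma momentPoly_eq_zero (k : ℕ) : momentPoly μ g k = 0 := by
  induction k using Nat.strong_induction_on with
  | _ k ih =>
    refine hharm k _ (isHomogeneous_momentPoly μ g k) ?_ fun ξ hξ => ?_
    · rw [laplacian_momentPoly hμ hg]
      rcases lt_or_ge k 2 with hk | hk
      · interval_cases k <;> simp
      · rw [ih (k - 2) (by omega), smul_zero]
    · rw [eval_momentPoly hμ hg, hmom ξ hξ k]

lemma integral_prod_pow_mul_eq_zero (d : ι →₀ ℕ) :
    ∫ η, (d.prod fun i m => η i ^ m) * g η ∂μ = 0 := by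
  have h := congr_arg (coeff d) (momentPoly_eq_zero hμ hg hharm hmom (d.sum fun _ m => m))
  simp only [coeff_momentPoly, coeff_zero, coeff_innerPoly_pow, if_pos, mul_assoc,
    integral_const_mul] at h
  refine (mul_eq_zero.mp h).resolve_left (Nat.cast_ne_zero.mpr ?_)
  rw [Finsupp.multinomial_eq]
  exact (Nat.multinomial_pos _ _).ne'

lemma integral_eval_mul_eq_zero (p : MvPolynomial ι ℝ) :
    ∫ η, eval (fun i => η i) p * g η ∂μ = 0 := by
  simp only [eval_eq_sum_of_support_subset subset_rfl, sum_mul, mul_assoc]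
  rw [integral_finsetSum _ fun d _ => ?_]
  · refine sum_eq_zero fun d _ => ?_
    rw [integral_const_mul, integral_prod_pow_mul_eq_zero hμ hg hharm hmom, mul_zero]
  · exact (hg.continuous_mul_of_ae_mem_isCompact (isCompact_sphere 0 1) hμ
      (by simp only [Finsupp.prod]; fun_prop)).const_mul _

theorem ae_eq_zero_of_integral_inner_pow_mul_eq_zero : g =ᵐ[μ] 0 :=
  ae_eq_zero_of_forall_integral_eval_mul_eq_zero (isCompact_sphere 0 1) hμ hg
    (integral_eval_mul_eq_zero hμ hg hharm hmom)

end MomentPolynomial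

theorem nonharmonic_cone_uniqueness_general (n : ℕ)
    (C : Set (EuclideanSpace ℝ (Fin n))) (hC : ∀ c : ℝ, c • C ⊆ C)
    (hnonharm : ¬ ∃ (l : ℕ) (P : MvPolynomial (Fin n) ℝ), P ≠ 0 ∧ IsHomHarmonic P l ∧
        C ⊆ {x | MvPolynomial.eval (fun i => x i) P = 0})
    (f : EuclideanSpace ℝ (Fin n) → ℂ) (hf : Integrable f (sphereMeasure n))
    (hvanish : ∀ ξ ∈ C, ∫ η, Complex.exp (-Complex.I * ((inner ℝ ξ η : ℝ) : ℂ)) * f η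
        ∂(sphereMeasure n) = 0) :
    f =ᵐ[sphereMeasure n] 0 := by
  have hσ : ∀ᵐ η ∂(sphereMeasure n), η ∈ Metric.sphere (0 : EuclideanSpace ℝ (Fin n)) 1 :=
    ae_restrict_mem Metric.isClosed_sphere.measurableSet
  have hharm (k : ℕ) (P : MvPolynomial (Fin n) ℝ) (hhom : P.IsHomogeneous k)
      (hlap : laplacian P = 0) (hzero : ∀ x ∈ C, eval (fun i => x i) P = 0) : P = 0 :=
    by_contra fun hP => hnonharm ⟨k, P, hP, ⟨hhom, hlap⟩, hzero⟩
  have hmom (ξ) (hξ : ξ ∈ C) (k : ℕ) :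
      ∫ η, ((inner ℝ ξ η : ℝ) : ℂ) ^ k * f η ∂(sphereMeasure n) = 0 := by
    refine integral_ofReal_pow_mul_eq_zero_of_integral_exp_mul_eq_zero hf (by fun_prop)
      (B := ‖ξ‖) ?_ (fun t => ?_) k
    · filter_upwards [hσ] with η hη
      simpa [mem_sphere_zero_iff_norm.mp hη] using abs_real_inner_le_norm ξ η
    · simpa [real_inner_smul_left] using hvanish _ (hC t ⟨ξ, hξ, rfl⟩)
  have hparts (ξ) (hξ : ξ ∈ C) (k : ℕ) :
      ∫ η, inner ℝ ξ η ^ k * (f η).re ∂(sphereMeasure n) = 0 ∧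
        ∫ η, inner ℝ ξ η ^ k * (f η).im ∂(sphereMeasure n) = 0 := by
    rw [← integral_ofReal_mul_eq_zero_iff
      (hf.continuous_mul_of_ae_mem_isCompact (isCompact_sphere 0 1) hσ (by fun_prop))]
    simpa using hmom ξ hξ k
  have hre := ae_eq_zero_of_integral_inner_pow_mul_eq_zero hσ hf.re hharm
    fun ξ hξ k => (hparts ξ hξ k).1
  have him := ae_eq_zero_of_integral_inner_pow_mul_eq_zero hσ hf.im hharm
    fun ξ hξ k => (hparts ξ hξ k).2
  filter_upwards [hre, him] with η hre him using Complex.ext hre him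

/-- If a cone `C` is not contained in the zero set of any nonzero homogeneous harmonic
polynomial, then any `f ∈ L¹(σ)` whose Fourier transform (of the measure `f dσ`)
vanishes on `C` is zero `σ`-a.e. -/
theorem nonharmonic_cone_uniqueness (n : ℕ) (hn : 2 ≤ n)
    (C : Set (EuclideanSpace ℝ (Fin n))) (hC : ∀ c : ℝ, c • C ⊆ C)
    (hnonharm : ¬ ∃ (l : ℕ) (P : MvPolynomial (Fin n) ℝ), P ≠ 0 ∧ IsHomHarmonic P l ∧
        C ⊆ {x | MvPolynomial.eval (fun i => x i) P = 0})
    (f : EuclideanSpace ℝ (Fin n) → ℂ) (hf : Integrable f (sphereMeasure n))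
    (hvanish : ∀ ξ ∈ C, ∫ η, Complex.exp (-Complex.I * ((inner ℝ ξ η : ℝ) : ℂ)) * f η
        ∂(sphereMeasure n) = 0) :
    f =ᵐ[sphereMeasure n] 0 :=
  nonharmonic_cone_uniqueness_general n C hC hnonharm f hf hvanish
end

section
/- Let n ≥ 2, let f ∈ L¹(σ) and let ω ∈ S^{n-1}. If ∫_{S^{n-1}} exp(-i r ⟪ω, η⟫) f(η) dσ(η) = 0 for every real r > 0, then for every bounded continuous function h : ℝ → ℂ one has ∫_{S^{n-1}} h(⟪ω, η⟫) f(η) dσ(η) = 0. -/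
/-!
As `φ = ⟪ω, ·⟫` is bounded on the sphere, `F(z) = ∫ exp(z φ) f dσ` is entire (differentiate under
the integral sign). It vanishes on the ray `-i (0, ∞)`, hence everywhere by the identity theorem,
so its derivatives at `0`, the moments `∫ φ ^ k f dσ`, all vanish. Weierstrass approximation on
the bounded range of `φ` then gives `∫ h(φ) f dσ = 0` for every continuous `h`.
-/

open MeasureTheory Filter Topology Set Complex

theorem Differentiable.eq_zero_of_eq_zero_on_ray {E : Type*} [NormedAddCommGroup E]
    [NormedSpace ℂ E] [CompleteSpace E] {F : ℂ → E} (hF : Differentiable ℂ F) {w : ℂ}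
    (hw : w ≠ 0) (hray : ∀ r : ℝ, 0 < r → F (w * r) = 0) : F = 0 := by
  have hmaps : MapsTo (fun r : ℝ => w * r) {1}ᶜ {w}ᶜ := fun r hr hwr =>
    hr (by simpa [hw] using hwr)
  have htend : Tendsto (fun r : ℝ => w * r) (𝓝[≠] 1) (𝓝[≠] w) := by
    have hcont : Continuous fun r : ℝ => w * r := by fun_prop
    simpa using hcont.continuousWithinAt.tendsto_nhdsWithin (x := 1) hmaps
  have hfreq : ∃ᶠ z in 𝓝[≠] w, F z = 0 :=
    htend.frequently <|
      (eventually_nhdsWithin_of_eventually_nhds (lt_mem_nhds one_pos)).frequently.mono hray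
  funext z
  exact AnalyticOnNhd.eqOn_zero_of_preconnected_of_frequently_eq_zero
    (fun z _ => hF.analyticAt z) isPreconnected_univ (mem_univ w) hfreq (mem_univ z)

section

variable {α : Type*} [MeasurableSpace α] {μ : Measure α} {f : α → ℂ} {φ : α → ℝ} {C : ℝ}

theorem MeasureTheory.Integrable.comp_mul_of_ae_abs_le (hf : Integrable f μ)
    (hφ : AEStronglyMeasurable φ μ) (hb : ∀ᵐ x ∂μ, |φ x| ≤ C) (g : ℝ → ℂ) (hg : Continuous g) :
    Integrable (fun x => g (φ x) * f x) μ := by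
  obtain ⟨M, hM⟩ :=
    isCompact_Icc.exists_bound_of_continuousOn (s := Icc (-C) C) hg.continuousOn
  exact hf.bdd_mul (hg.comp_aestronglyMeasurable hφ) (hb.mono fun x hx => hM _ (abs_le.1 hx))

theorem norm_ofReal_pow_mul_cexp_le {t : ℝ} (ht : |t| ≤ C) (k : ℕ) (z : ℂ) :
    ‖(t : ℂ) ^ k * cexp (z * t)‖ ≤ C ^ k * Real.exp (‖z‖ * C) := by
  rw [norm_mul, norm_pow, norm_real, Real.norm_eq_abs, norm_exp]
  have hre : (z * t).re ≤ ‖z‖ * C :=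
    calc (z * t).re ≤ ‖z * t‖ := re_le_norm _
      _ = ‖z‖ * |t| := by rw [norm_mul, norm_real, Real.norm_eq_abs]
      _ ≤ ‖z‖ * C := by gcongr
  exact mul_le_mul (pow_le_pow_left₀ (abs_nonneg t) ht k) (Real.exp_le_exp.2 hre)
    (Real.exp_pos _).le (pow_nonneg ((abs_nonneg t).trans ht) k)

/-- The `k`-th derivative of `z ↦ ∫ e^{zφ} f dμ`; its value at `0` is the `k`-th moment. -/
noncomputable def laplaceMoment (μ : Measure α) (f : α → ℂ) (φ : α → ℝ) (k : ℕ) (z : ℂ) : ℂ :=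
  ∫ x, (φ x : ℂ) ^ k * cexp (z * φ x) * f x ∂μ

theorem hasDerivAt_laplaceMoment (hf : Integrable f μ) (hφ : AEStronglyMeasurable φ μ)
    (hb : ∀ᵐ x ∂μ, |φ x| ≤ C) (k : ℕ) (z₀ : ℂ) :
    HasDerivAt (laplaceMoment μ f φ k) (laplaceMoment μ f φ (k + 1) z₀) z₀ := by
  have hint : ∀ j (z : ℂ), Integrable (fun x => (φ x : ℂ) ^ j * cexp (z * φ x) * f x) μ :=
    fun j z => hf.comp_mul_of_ae_abs_le hφ hb (fun t : ℝ => (t : ℂ) ^ j * cexp (z * t))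
      (by fun_prop)
  have hbound : ∀ᵐ x ∂μ, ∀ z ∈ Metric.ball z₀ 1,
      ‖(φ x : ℂ) ^ (k + 1) * cexp (z * φ x) * f x‖
        ≤ C ^ (k + 1) * Real.exp ((‖z₀‖ + 1) * C) * ‖f x‖ := by
    filter_upwards [hb] with x hx z hz
    have hC : 0 ≤ C := (abs_nonneg _).trans hx
    have hz' : ‖z‖ ≤ ‖z₀‖ + 1 := by
      have := norm_le_norm_add_norm_sub' z z₀
      rw [Metric.mem_ball, dist_eq_norm] at hz
      linarith
    rw [norm_mul]
    gcongr
    exact (norm_ofReal_pow_mul_cexp_le hx _ _).trans (by gcongr)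
  have hderiv : ∀ x, ∀ z ∈ Metric.ball z₀ 1,
      HasDerivAt (fun z => (φ x : ℂ) ^ k * cexp (z * φ x) * f x)
        ((φ x : ℂ) ^ (k + 1) * cexp (z * φ x) * f x) z := by
    intro x z _
    exact (((hasDerivAt_mul_const (φ x : ℂ)).cexp.const_mul ((φ x : ℂ) ^ k)).mul_const
      (f x)).congr_deriv (by ring)
  exact (hasDerivAt_integral_of_dominated_loc_of_deriv_le (Metric.ball_mem_nhds z₀ one_pos)
    (.of_forall fun z => (hint k z).aestronglyMeasurable) (hint k z₀)
    (hint (k + 1) z₀).aestronglyMeasurable hbound (hf.norm.const_mul _) (ae_of_all _ hderiv)).2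

theorem laplaceMoment_eq_zero_of_zero_eq_zero (hf : Integrable f μ)
    (hφ : AEStronglyMeasurable φ μ) (hb : ∀ᵐ x ∂μ, |φ x| ≤ C)
    (h₀ : laplaceMoment μ f φ 0 = 0) (k : ℕ) :
    laplaceMoment μ f φ k = 0 := by
  induction k with
  | zero => exact h₀
  | succ k ih =>
    funext z
    have hk := hasDerivAt_laplaceMoment hf hφ hb k z
    rw [ih] at hk
    exact hk.unique (hasDerivAt_const z 0)

theorem integral_pow_mul_eq_zero_of_fourier_eq_zero_on_ray (hf : Integrable f μ)
    (hφ : AEStronglyMeasurable φ μ) (hb : ∀ᵐ x ∂μ, |φ x| ≤ C)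
    (hvanish : ∀ r : ℝ, 0 < r → ∫ x, cexp (-I * r * φ x) * f x ∂μ = 0) (k : ℕ) :
    ∫ x, (φ x : ℂ) ^ k * f x ∂μ = 0 := by
  have hdiff : Differentiable ℂ (laplaceMoment μ f φ 0) := fun z =>
    (hasDerivAt_laplaceMoment hf hφ hb 0 z).differentiableAt
  have h₀ := hdiff.eq_zero_of_eq_zero_on_ray (neg_ne_zero.2 I_ne_zero) fun r hr => by
    simpa [laplaceMoment] using hvanish r hr
  simpa [laplaceMoment] using congr_fun (laplaceMoment_eq_zero_of_zero_eq_zero hf hφ hb h₀ k) 0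

theorem integral_eval_mul_eq_zero_of_moments (hf : Integrable f μ)
    (hφ : AEStronglyMeasurable φ μ) (hb : ∀ᵐ x ∂μ, |φ x| ≤ C)
    (hmom : ∀ k : ℕ, ∫ x, (φ x : ℂ) ^ k * f x ∂μ = 0) (p : Polynomial ℝ) :
    ∫ x, ((p.eval (φ x) : ℝ) : ℂ) * f x ∂μ = 0 := by
  induction p using Polynomial.induction_on' with
  | add p q hp hq =>
    simp only [Polynomial.eval_add, ofReal_add, add_mul]
    rw [integral_add
      (hf.comp_mul_of_ae_abs_le hφ hb (fun t => ((p.eval t : ℝ) : ℂ)) (by fun_prop))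
      (hf.comp_mul_of_ae_abs_le hφ hb (fun t => ((q.eval t : ℝ) : ℂ)) (by fun_prop)),
      hp, hq, add_zero]
  | monomial k a =>
    simp only [Polynomial.eval_monomial, ofReal_mul, ofReal_pow, mul_assoc]
    rw [integral_const_mul, hmom k, mul_zero]

theorem integral_ofReal_comp_mul_eq_zero_of_forall_polynomial (hf : Integrable f μ)
    (hφ : AEStronglyMeasurable φ μ) (hb : ∀ᵐ x ∂μ, |φ x| ≤ C)
    (hpoly : ∀ p : Polynomial ℝ, ∫ x, ((p.eval (φ x) : ℝ) : ℂ) * f x ∂μ = 0) {g : ℝ → ℝ}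
    (hg : Continuous g) : ∫ x, (g (φ x) : ℂ) * f x ∂μ = 0 := by
  have hle : ∀ ε > 0, ‖∫ x, (g (φ x) : ℂ) * f x ∂μ‖ ≤ ε * ∫ x, ‖f x‖ ∂μ := by
    intro ε hε
    obtain ⟨p, hp⟩ := exists_polynomial_near_of_continuousOn (-C) C g hg.continuousOn ε hε
    have hsub : ∫ x, (g (φ x) : ℂ) * f x ∂μ
        = ∫ x, ((g (φ x) - p.eval (φ x) : ℝ) : ℂ) * f x ∂μ := by
      simp only [ofReal_sub, sub_mul]
      rw [integral_sub (hf.comp_mul_of_ae_abs_le hφ hb (fun t => (g t : ℂ)) (by fun_prop))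
        (hf.comp_mul_of_ae_abs_le hφ hb (fun t => ((p.eval t : ℝ) : ℂ)) (by fun_prop)),
        hpoly, sub_zero]
    rw [hsub, ← integral_const_mul]
    refine norm_integral_le_of_norm_le (hf.norm.const_mul ε) ?_
    filter_upwards [hb] with x hx
    rw [norm_mul, norm_real, Real.norm_eq_abs, abs_sub_comm]
    exact mul_le_mul_of_nonneg_right (hp _ (abs_le.1 hx)).le (norm_nonneg _)
  have htend : Tendsto (fun ε => ε * ∫ x, ‖f x‖ ∂μ) (𝓝[>] 0) (𝓝 0) := by
    simpa using (tendsto_id.mul_const _).mono_left (nhdsWithin_le_nhds (a := (0 : ℝ)))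
  exact norm_le_zero_iff.1 (ge_of_tendsto htend (eventually_nhdsWithin_of_forall hle))

theorem integral_comp_mul_eq_zero_of_forall_polynomial (hf : Integrable f μ)
    (hφ : AEStronglyMeasurable φ μ) (hb : ∀ᵐ x ∂μ, |φ x| ≤ C)
    (hpoly : ∀ p : Polynomial ℝ, ∫ x, ((p.eval (φ x) : ℝ) : ℂ) * f x ∂μ = 0) {h : ℝ → ℂ}
    (hh : Continuous h) : ∫ x, h (φ x) * f x ∂μ = 0 := by
  have hre := integral_ofReal_comp_mul_eq_zero_of_forall_polynomial hf hφ hb hpoly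
    (continuous_re.comp hh)
  have him := integral_ofReal_comp_mul_eq_zero_of_forall_polynomial hf hφ hb hpoly
    (continuous_im.comp hh)
  calc ∫ x, h (φ x) * f x ∂μ
      = ∫ x, ((h (φ x)).re * f x + I * ((h (φ x)).im * f x)) ∂μ := by
        congr with x
        conv_lhs => rw [← re_add_im (h (φ x))]
        ring
    _ = 0 := by
      rw [integral_add
        (hf.comp_mul_of_ae_abs_le hφ hb (fun t => ((h t).re : ℂ)) (by fun_prop))
        ((hf.comp_mul_of_ae_abs_le hφ hb (fun t => ((h t).im : ℂ)) (by fun_prop)).const_mul I),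
        integral_const_mul]
      simp only [Function.comp_apply] at hre him
      rw [hre, him, mul_zero, add_zero]

theorem integral_comp_mul_eq_zero_of_fourier_eq_zero_on_ray (hf : Integrable f μ)
    (hφ : AEStronglyMeasurable φ μ) (hb : ∀ᵐ x ∂μ, |φ x| ≤ C)
    (hvanish : ∀ r : ℝ, 0 < r → ∫ x, cexp (-I * r * φ x) * f x ∂μ = 0) {h : ℝ → ℂ}
    (hh : Continuous h) : ∫ x, h (φ x) * f x ∂μ = 0 :=
  integral_comp_mul_eq_zero_of_forall_polynomial hf hφ hb
    (integral_eval_mul_eq_zero_of_moments hf hφ hb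
      (integral_pow_mul_eq_zero_of_fourier_eq_zero_on_ray hf hφ hb hvanish)) hh

end

theorem integral_vanish_of_ray_vanish_general (n : ℕ)
    (f : EuclideanSpace ℝ (Fin n) → ℂ) (hf : Integrable f (sphereMeasure n))
    (ω : EuclideanSpace ℝ (Fin n))
    (hvanish : ∀ r : ℝ, 0 < r →
      ∫ η, Complex.exp (-Complex.I * r * ((inner ℝ ω η : ℝ) : ℂ)) * f η
        ∂(sphereMeasure n) = 0) :
    ∀ h : ℝ → ℂ, Continuous h → (∃ M : ℝ, ∀ t : ℝ, ‖h t‖ ≤ M) →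
      ∫ η, h ((inner ℝ ω η : ℝ)) * f η ∂(sphereMeasure n) = 0 := by
  intro h hh _
  have hb : ∀ᵐ η ∂sphereMeasure n, |inner ℝ ω η| ≤ ‖ω‖ := by
    filter_upwards [ae_restrict_mem Metric.isClosed_sphere.measurableSet] with η hη
    simpa [mem_sphere_zero_iff_norm.1 hη] using abs_real_inner_le_norm ω η
  have hφ : Continuous fun η : EuclideanSpace ℝ (Fin n) => inner ℝ ω η := by fun_prop
  exact integral_comp_mul_eq_zero_of_fourier_eq_zero_on_ray hf hφ.aestronglyMeasurable hb
    hvanish hh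

/-- If the Fourier transform of `f dσ` vanishes along the open ray through `ω ∈ S^{n-1}`,
then `∫ h(⟪ω,η⟫) f(η) dσ(η) = 0` for every bounded continuous `h : ℝ → ℂ`. -/
theorem integral_vanish_of_ray_vanish (n : ℕ) (hn : 2 ≤ n)
    (f : EuclideanSpace ℝ (Fin n) → ℂ) (hf : Integrable f (sphereMeasure n))
    (ω : EuclideanSpace ℝ (Fin n)) (hω : ‖ω‖ = 1)
    (hvanish : ∀ r : ℝ, 0 < r →
      ∫ η, Complex.exp (-Complex.I * r * ((inner ℝ ω η : ℝ) : ℂ)) * f η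
        ∂(sphereMeasure n) = 0) :
    ∀ h : ℝ → ℂ, Continuous h → (∃ M : ℝ, ∀ t : ℝ, ‖h t‖ ≤ M) →
      ∫ η, h ((inner ℝ ω η : ℝ)) * f η ∂(sphereMeasure n) = 0 :=
  integral_vanish_of_ray_vanish_general n f hf ω hvanish
end

section
/- Let g : ℝ → ℂ be an integrable function vanishing outside the interval [-1, 1]. If ∫_ℝ exp(i r t) g(t) dt = 0 for every real r > 0, then g = 0 almost everywhere with respect to Lebesgue measure. -/
/-!
The function `F z = ∫ exp (i z t) g(t) dt` is entire, since `g` has compact support. It vanishes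
on the positive reals, which accumulate at `1`, so by the identity theorem it vanishes on all of
`ℂ`. On the real axis `F` is the Fourier transform of `g`, and an integrable function with
vanishing Fourier transform is zero a.e.: pairing it with `𝓕 φ` for Schwartz `φ` gives zero,
and every smooth compactly supported function is of this form.
-/

open MeasureTheory Complex Filter Function Set Metric FourierTransform Topology
open scoped ContDiff

theorem MeasureTheory.Integrable.ae_eq_zero_of_fourier_eq_zero
    {V E : Type*} [NormedAddCommGroup V] [InnerProductSpace ℝ V] [FiniteDimensional ℝ V]
    [MeasurableSpace V] [BorelSpace V] [NormedAddCommGroup E] [NormedSpace ℂ E] [CompleteSpace E]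
    {f : V → E} (hf : Integrable f) (h : 𝓕 f = 0) : f =ᵐ[volume] 0 := by
  refine ae_eq_zero_of_integral_contDiff_smul_eq_zero hf.locallyIntegrable fun ψ hψ hψc => ?_
  have hψc' : HasCompactSupport (ofRealCLM ∘ ψ) := hψc.comp_left rfl
  have hψ' : ContDiff ℝ ∞ (ofRealCLM ∘ ψ) := by fun_prop
  set φ := 𝓕⁻ (hψc'.toSchwartzMap hψ')
  have hφ : ∀ ξ, 𝓕 φ ξ = ψ ξ := fun ξ => by simp [φ]
  have key : ∫ ξ, 𝓕 φ ξ • f ξ = ∫ x, φ x • 𝓕 f x := by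
    have := VectorFourier.integral_fourierIntegral_smul_eq_flip (L := innerₗ V)
      Real.continuous_fourierChar continuous_inner (φ.integrable (μ := volume)) hf
    rwa [flip_innerₗ] at this
  simpa [hφ, h] using key

section CompactSupport

variable {E : Type*} [NormedAddCommGroup E] [NormedSpace ℂ E] {g : ℝ → E} {R : ℝ}

theorem norm_cexp_I_mul_ofReal_le {z : ℂ} {C t : ℝ} (hz : ‖z‖ ≤ C) (ht : |t| ≤ R) :
    ‖cexp (I * z * t)‖ ≤ Real.exp (C * R) := by
  rw [norm_exp, Real.exp_le_exp]
  calc (I * z * t).re ≤ ‖I * z * t‖ := re_le_norm _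
    _ = ‖z‖ * |t| := by simp
    _ ≤ C * R := mul_le_mul hz ht (abs_nonneg t) ((norm_nonneg z).trans hz)

theorem norm_smul_le_of_support_subset_Icc (hsupp : support g ⊆ Icc (-R) R) {c : ℝ → ℂ} {C : ℝ}
    (hc : ∀ t, |t| ≤ R → ‖c t‖ ≤ C) (t : ℝ) : ‖c t • g t‖ ≤ C * ‖g t‖ := by
  by_cases ht : g t = 0
  · simp [ht]
  · rw [norm_smul]
    exact mul_le_mul_of_nonneg_right (hc t (abs_le.2 (hsupp ht))) (norm_nonneg _)

theorem integrable_smul_of_support_subset_Icc (hg : Integrable g) (hsupp : support g ⊆ Icc (-R) R)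
    {c : ℝ → ℂ} (hc : Continuous c) : Integrable fun t => c t • g t := by
  obtain ⟨C, hC⟩ := (isCompact_Icc (a := -R) (b := R)).exists_bound_of_continuousOn hc.continuousOn
  exact (hg.norm.const_mul C).mono' (hc.aestronglyMeasurable.smul hg.1)
    (ae_of_all _ (norm_smul_le_of_support_subset_Icc hsupp fun t ht => hC t (abs_le.1 ht)))

theorem hasDerivAt_integral_cexp_mul_smul (hg : Integrable g) (hsupp : support g ⊆ Icc (-R) R)
    (z₀ : ℂ) :
    HasDerivAt (fun z : ℂ => ∫ t : ℝ, cexp (I * z * t) • g t)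
      (∫ t : ℝ, (I * t * cexp (I * z₀ * t)) • g t) z₀ := by
  have hbound : ∀ z ∈ ball z₀ 1, ∀ t : ℝ, |t| ≤ R →
      ‖I * t * cexp (I * z * t)‖ ≤ R * Real.exp ((‖z₀‖ + 1) * R) := by
    intro z hz t ht
    have hz' : ‖z‖ ≤ ‖z₀‖ + 1 := by
      linarith [norm_sub_norm_le z z₀, mem_ball_iff_norm.1 hz]
    rw [norm_mul, norm_mul, norm_I, one_mul, norm_real, Real.norm_eq_abs]
    exact mul_le_mul ht (norm_cexp_I_mul_ofReal_le hz' ht) (norm_nonneg _) ((abs_nonneg t).trans ht)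
  have hint {c : ℝ → ℂ} (hc : Continuous c) := integrable_smul_of_support_subset_Icc hg hsupp hc
  refine (hasDerivAt_integral_of_dominated_loc_of_deriv_le
    (F := fun (z : ℂ) (t : ℝ) => cexp (I * z * t) • g t)
    (F' := fun (z : ℂ) (t : ℝ) => (I * t * cexp (I * z * t)) • g t) (ball_mem_nhds z₀ one_pos)
    (Eventually.of_forall fun z => (hint (c := fun t : ℝ => cexp (I * z * t)) (by fun_prop)).1)
    (hint (c := fun t : ℝ => cexp (I * z₀ * t)) (by fun_prop))
    (hint (c := fun t : ℝ => I * t * cexp (I * z₀ * t)) (by fun_prop)).1 ?_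
    (hg.norm.const_mul (R * Real.exp ((‖z₀‖ + 1) * R))) ?_).2
  · exact ae_of_all _ fun t z hz => norm_smul_le_of_support_subset_Icc hsupp (hbound z hz) t
  · refine ae_of_all _ fun t z _ => ?_
    have := (((hasDerivAt_id z).const_mul I).mul_const (t : ℂ)).cexp.smul_const (g t)
    simpa [mul_comm] using this

theorem differentiable_integral_cexp_mul_smul (hg : Integrable g) (hsupp : support g ⊆ Icc (-R) R) :
    Differentiable ℂ fun z : ℂ => ∫ t : ℝ, cexp (I * z * t) • g t := fun z =>
  (hasDerivAt_integral_cexp_mul_smul hg hsupp z).differentiableAt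

end CompactSupport

theorem Differentiable.eq_zero_of_forall_pos_real {E : Type*} [NormedAddCommGroup E]
    [NormedSpace ℂ E] [CompleteSpace E] {F : ℂ → E}
    (hF : Differentiable ℂ F) (h : ∀ r : ℝ, 0 < r → F r = 0) : F = 0 := by
  have hfreq : ∃ᶠ z in 𝓝[≠] (1 : ℂ), F z = 0 := by
    have hlim : Tendsto ((↑) : ℝ → ℂ) (𝓝[>] 1) (𝓝[≠] 1) := by
      refine tendsto_nhdsWithin_of_tendsto_nhds_of_eventually_within _ ?_ ?_
      · simpa using continuous_ofReal.continuousWithinAt.tendsto (x := (1 : ℝ)) (s := Ioi 1)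
      · filter_upwards [self_mem_nhdsWithin] with r hr
        exact mem_compl_singleton_iff.2 (mod_cast (mem_Ioi.1 hr).ne')
    refine hlim.frequently (Eventually.frequently ?_)
    filter_upwards [self_mem_nhdsWithin] with r (hr : 1 < r) using h r (by linarith)
  funext z
  exact (analyticOnNhd_univ_iff_differentiable.2 hF).eqOn_zero_of_preconnected_of_frequently_eq_zero
    isPreconnected_univ (mem_univ 1) hfreq (mem_univ z)

/-- If an integrable function `g` supported in `[-1,1]` has Fourier transform
vanishing on the positive half-line, then `g = 0` a.e. -/
theorem ae_zero_of_fourier_vanish_on_ray (g : ℝ → ℂ)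
    (hg : Integrable g volume)
    (hsupp : ∀ t : ℝ, t ∉ Set.Icc (-1 : ℝ) 1 → g t = 0)
    (hvanish : ∀ r : ℝ, 0 < r → ∫ t : ℝ, Complex.exp (Complex.I * r * t) * g t = 0) :
    g =ᵐ[volume] 0 := by
  have hF : ∀ z : ℂ, ∫ t : ℝ, cexp (I * z * t) • g t = 0 :=
    congrFun <| (differentiable_integral_cexp_mul_smul hg (support_subset_iff'.2 hsupp))
      |>.eq_zero_of_forall_pos_real (by simpa only [smul_eq_mul] using hvanish)
  refine hg.ae_eq_zero_of_fourier_eq_zero (funext fun ξ => ?_)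
  rw [Real.fourier_real_eq_integral_exp_smul, Pi.zero_apply, ← hF (-2 * Real.pi * ξ)]
  congr 1 with t
  congr 2
  push_cast
  ring
end

section
/- Let n ≥ 2 and let ω ∈ S^{n-1}. The pushforward of the surface measure σ under the map η ↦ ⟪ω, η⟫ from S^{n-1} to ℝ is absolutely continuous with respect to Lebesgue measure on ℝ. -/
open MeasureTheory

/-!
After a rotation taking `ω` to a coordinate vector `e_{i₀}`, the function `⟪ω, ·⟫` becomes the
coordinate `x_{i₀}`. Away from the poles `±e_{i₀}`, the sphere is covered by the hemispheres
`{±x_i > 0}`, `i ≠ i₀`; each is the graph of the smooth map `u ↦ ±√(1 - ‖u‖²)` over the open unit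
ball in the remaining coordinates, among which is `x_{i₀}`. Smooth maps are locally Lipschitz, so
they send the Lebesgue-null (i.e. `μH[n-1]`-null) set `{u | u_{i₀} ∈ N}` to a `μH[n-1]`-null set,
and the two poles are `μH[n-1]`-null as `n - 1 > 0`.
-/

open Set Metric Measure Topology

theorem LocallyLipschitzOn.hausdorffMeasure_image_null {X Y : Type*}
    [EMetricSpace X] [MeasurableSpace X] [BorelSpace X] [SecondCountableTopology X]
    [EMetricSpace Y] [MeasurableSpace Y] [BorelSpace Y]
    {f : X → Y} {s : Set X} (hf : LocallyLipschitzOn s f) {d : ℝ} (hd : 0 ≤ d)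
    (hs : μH[d] s = 0) : μH[d] (f '' s) = 0 := by
  have hf' : ∀ x ∈ s, ∃ K : NNReal, ∃ t ∈ 𝓝[s] x, LipschitzOnWith K f t := fun x hx => hf hx
  choose! K t ht hft using hf'
  obtain ⟨c, hcs, hc, hsc⟩ := TopologicalSpace.countable_cover_nhdsWithin ht
  have hcover : f '' s ⊆ ⋃ x ∈ c, f '' (t x ∩ s) := by
    rintro _ ⟨y, hy, rfl⟩
    obtain ⟨x, hx, hyx⟩ := mem_iUnion₂.1 (hsc hy)
    exact mem_iUnion₂.2 ⟨x, hx, y, ⟨hyx, hy⟩, rfl⟩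
  refine measure_mono_null hcover ((measure_biUnion_null_iff hc).2 fun x hx => ?_)
  refine le_antisymm ?_ zero_le
  calc μH[d] (f '' (t x ∩ s)) ≤ (K x : ENNReal) ^ d * μH[d] (t x ∩ s) :=
        ((hft x (hcs hx)).mono inter_subset_left).hausdorffMeasure_image_le hd
    _ = 0 := by rw [measure_mono_null inter_subset_right hs, mul_zero]

theorem locallyLipschitzOn_of_forall_contDiffAt {𝕂 E F : Type*} [RCLike 𝕂]
    [NormedAddCommGroup E] [NormedSpace 𝕂 E] [NormedAddCommGroup F] [NormedSpace 𝕂 F]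
    {f : E → F} {s : Set E} (hf : ∀ x ∈ s, ContDiffAt 𝕂 1 f x) : LocallyLipschitzOn s f :=
  fun x hx =>
    let ⟨K, t, ht, hft⟩ := (hf x hx).exists_lipschitzOnWith
    ⟨K, t, mem_nhdsWithin_of_mem_nhds ht, hft⟩

namespace EuclideanSpace

variable {ι : Type*} [Fintype ι]

section Hemispheres

variable [DecidableEq ι]

noncomputable def sphereGraph (i : ι) (c : ℝ) (u : {j // j ≠ i} → ℝ) : EuclideanSpace ℝ ι :=
  WithLp.toLp 2 fun j => if h : j = i then c * √(1 - ∑ k, u k ^ 2) else u ⟨j, h⟩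

theorem sphereGraph_apply_of_ne {i j : ι} (h : j ≠ i) (c : ℝ) (u : {j // j ≠ i} → ℝ) :
    sphereGraph i c u j = u ⟨j, h⟩ := by
  simp [sphereGraph, h]

theorem contDiffAt_sphereGraph {n : WithTop ℕ∞} (i : ι) (c : ℝ) {u : {j // j ≠ i} → ℝ}
    (hu : ∑ k, u k ^ 2 < 1) : ContDiffAt ℝ n (sphereGraph i c) u := by
  refine contDiffAt_piLp' 2 fun j => ?_
  by_cases h : j = i
  · simp only [sphereGraph, h, dite_true]
    exact contDiffAt_const.mul (ContDiffAt.sqrt (by fun_prop) (sub_ne_zero.2 hu.ne'))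
  · simp only [sphereGraph, h, dite_false]
    exact (contDiff_apply ℝ ℝ _).contDiffAt

theorem sum_sq_subtype_ne {x : EuclideanSpace ℝ ι} (hx : ‖x‖ = 1) (i : ι) :
    ∑ j : {j // j ≠ i}, x j ^ 2 = 1 - x i ^ 2 := by
  have := EuclideanSpace.real_norm_sq_eq x
  rw [hx, Fintype.sum_eq_add_sum_subtype_ne _ i] at this
  linarith

theorem sphereGraph_sign {x : EuclideanSpace ℝ ι} (hx : ‖x‖ = 1) (i : ι) :
    sphereGraph i (SignType.sign (x i)) (fun j => x j) = x := by
  ext j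
  by_cases h : j = i
  · subst h
    simp [sphereGraph, sum_sq_subtype_ne hx, Real.sqrt_sq_eq_abs]
  · exact sphereGraph_apply_of_ne h _ _

theorem hausdorffMeasure_sphereGraph_image_null {i₀ i : ι} (h : i₀ ≠ i) (c : ℝ) {N : Set ℝ}
    (hN : volume N = 0) :
    μH[(Fintype.card ι : ℝ) - 1]
      (sphereGraph i c '' {u | ∑ k, u k ^ 2 < 1 ∧ u ⟨i₀, h⟩ ∈ N}) = 0 := by
  have hcard : (Fintype.card {j // j ≠ i} : ℝ) = Fintype.card ι - 1 := by
    rw [Fintype.card_subtype_compl, Fintype.card_subtype_eq,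
      Nat.cast_sub (Fintype.card_pos_iff.2 ⟨i⟩), Nat.cast_one]
  rw [← hcard]
  refine (locallyLipschitzOn_of_forall_contDiffAt fun u hu =>
    contDiffAt_sphereGraph i c hu.1).hausdorffMeasure_image_null (Nat.cast_nonneg _) ?_
  rw [hausdorffMeasure_pi_real, volume_pi]
  exact measure_mono_null (fun u hu => hu.2) (Measure.pi_eval_preimage_null _ hN)

theorem finite_sphere_inter_forall_ne_eq_zero (i₀ : ι) :
    (sphere (0 : EuclideanSpace ℝ ι) 1 ∩ {x | ∀ j ≠ i₀, x j = 0}).Finite := by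
  refine ((finite_singleton 1).insert (-1)).image (EuclideanSpace.single i₀) |>.subset ?_
  rintro x ⟨hx, hx₀⟩
  have hx_eq : x = EuclideanSpace.single i₀ (x i₀) := by
    ext j
    by_cases h : j = i₀
    · simp [h]
    · simp [h, hx₀ j h]
  refine ⟨x i₀, ?_, hx_eq.symm⟩
  rw [mem_sphere_zero_iff_norm, hx_eq, PiLp.norm_single, Real.norm_eq_abs] at hx
  rcases (abs_eq zero_le_one).1 hx with h | h <;> simp [h]

theorem sphere_inter_coord_preimage_subset (i₀ : ι) (N : Set ℝ) :
    sphere (0 : EuclideanSpace ℝ ι) 1 ∩ (fun x => x i₀) ⁻¹' N ⊆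
      (sphere 0 1 ∩ {x | ∀ j ≠ i₀, x j = 0}) ∪
        ⋃ (i : ι) (h : i₀ ≠ i) (σ : SignType),
          sphereGraph i σ '' {u | ∑ k, u k ^ 2 < 1 ∧ u ⟨i₀, h⟩ ∈ N} := by
  rintro x ⟨hx, hxN⟩
  rw [mem_sphere_zero_iff_norm] at hx
  by_cases hpole : ∀ j ≠ i₀, x j = 0
  · exact Or.inl ⟨mem_sphere_zero_iff_norm.2 hx, hpole⟩
  push Not at hpole
  obtain ⟨i, hi, hxi⟩ := hpole
  refine Or.inr (mem_iUnion₂.2 ⟨i, Ne.symm hi, mem_iUnion.2 ⟨SignType.sign (x i), fun j => x j,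
    ⟨?_, hxN⟩, sphereGraph_sign hx i⟩⟩)
  rw [sum_sq_subtype_ne hx]
  have := pow_pos (abs_pos.2 hxi) 2
  rw [sq_abs] at this
  linarith

theorem hausdorffMeasure_sphere_inter_coord_preimage_null [Nontrivial ι] (i₀ : ι) {N : Set ℝ}
    (hN : volume N = 0) :
    μH[(Fintype.card ι : ℝ) - 1] (sphere (0 : EuclideanSpace ℝ ι) 1 ∩ (fun x => x i₀) ⁻¹' N)
      = 0 := by
  have hd : 0 < (Fintype.card ι : ℝ) - 1 := by
    have : (1 : ℝ) < Fintype.card ι := by exact_mod_cast Fintype.one_lt_card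
    linarith
  have := nullSingletonClass_hausdorff (EuclideanSpace ℝ ι) hd
  refine measure_mono_null (sphere_inter_coord_preimage_subset i₀ N) (measure_union_null
    ((finite_sphere_inter_forall_ne_eq_zero i₀).measure_zero _) ?_)
  exact measure_iUnion_null fun i => measure_iUnion_null fun h => measure_iUnion_null fun σ =>
    hausdorffMeasure_sphereGraph_image_null h σ hN

end Hemispheres

theorem exists_linearIsometryEquiv_apply_eq_inner (i₀ : ι) {ω : EuclideanSpace ℝ ι}
    (hω : ‖ω‖ = 1) :
    ∃ T : EuclideanSpace ℝ ι ≃ₗᵢ[ℝ] EuclideanSpace ℝ ι, ∀ η, T η i₀ = inner ℝ ω η := by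
  obtain ⟨b, hb⟩ := (orthonormal_subsingleton_iff.2 fun _ => hω :
    Orthonormal ℝ (({i₀} : Set ι).domRestrict fun _ => ω)).exists_orthonormalBasis_extension_of_card_eq
      (by simp)
  exact ⟨b.repr, fun η => by rw [b.repr_apply_apply, hb i₀ rfl]⟩

theorem hausdorffMeasure_sphere_inter_inner_preimage_null [Nontrivial ι] {ω : EuclideanSpace ℝ ι}
    (hω : ‖ω‖ = 1) {N : Set ℝ} (hN : volume N = 0) :
    μH[(Fintype.card ι : ℝ) - 1] (sphere (0 : EuclideanSpace ℝ ι) 1 ∩ (inner ℝ ω ·) ⁻¹' N)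
      = 0 := by
  classical
  obtain ⟨i₀⟩ : Nonempty ι := inferInstance
  obtain ⟨T, hT⟩ := exists_linearIsometryEquiv_apply_eq_inner i₀ hω
  have hpre : sphere 0 1 ∩ (inner ℝ ω ·) ⁻¹' N = T ⁻¹' (sphere 0 1 ∩ (fun x => x i₀) ⁻¹' N) := by
    ext η
    simp [hT]
  rw [hpre, ← LinearIsometryEquiv.coe_toIsometryEquiv, IsometryEquiv.hausdorffMeasure_preimage]
  exact hausdorffMeasure_sphere_inter_coord_preimage_null i₀ hN

end EuclideanSpace

/-- The pushforward of the surface measure of the unit sphere under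
`η ↦ ⟪ω, η⟫` is absolutely continuous with respect to Lebesgue measure. -/
theorem map_inner_sphereMeasure_absolutelyContinuous (n : ℕ) (hn : 2 ≤ n)
    (ω : EuclideanSpace ℝ (Fin n)) (hω : ‖ω‖ = 1) :
    (sphereMeasure n).map (fun η => (inner ℝ ω η : ℝ)) ≪ (volume : Measure ℝ) := by
  have : Nontrivial (Fin n) := Fin.nontrivial_iff_two_le.2 hn
  have hmeas : Measurable fun η : EuclideanSpace ℝ (Fin n) => (inner ℝ ω η : ℝ) := by fun_prop
  refine Measure.AbsolutelyContinuous.mk fun N hNm hN => ?_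
  rw [sphereMeasure, Measure.map_apply hmeas hNm, Measure.restrict_apply (hmeas hNm), inter_comm]
  simpa using EuclideanSpace.hausdorffMeasure_sphere_inter_inner_preimage_null hω hN
end

section
/- Let n ≥ 2 and f ∈ L¹(σ), and define F : ℝⁿ → ℂ by F(ξ) = ∫_{S^{n-1}} exp(-i ⟪ξ, η⟫) f(η) dσ(η). Then F is infinitely differentiable and satisfies the Helmholtz equation ΔF(ξ) + F(ξ) = 0 for every ξ ∈ ℝⁿ, where ΔF(ξ) = ∑_{i=1}^n ∂²F/∂x_i²(ξ) is the sum of the second directional derivatives of F at ξ along the standard orthonormal basis vectors. -/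
set_option maxHeartbeats 1000000

open MeasureTheory

namespace FourierSphereHelmholtz

open Real
noncomputable section
variable {n : ℕ}

abbrev Esp (n : ℕ) := EuclideanSpace ℝ (Fin n)

noncomputable def LL (n : ℕ) : Esp n →L[ℝ] Esp n →L[ℝ] ℝ := (2 * π)⁻¹ • (innerSL ℝ)

lemma ft_eq (μ : Measure (Esp n)) (f : Esp n → ℂ) (ξ : Esp n) :
    VectorFourier.fourierIntegral Real.fourierChar μ (LL n).toLinearMap₁₂ f ξ
      = ∫ η, Complex.exp (-Complex.I * ((inner ℝ ξ η : ℝ) : ℂ)) * f η ∂μ := by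
  simp_rw [VectorFourier.fourierIntegral, Circle.smul_def, Real.fourierChar_apply, LL]
  congr 1; ext η
  congr 2
  have h : (inner ℝ ξ η : ℝ) = inner ℝ η ξ := real_inner_comm _ _
  have hπ : (π : ℂ) ≠ 0 := by exact_mod_cast pi_ne_zero
  simp [h]
  field_simp
  rfl

lemma sphere_ae (n : ℕ) : ∀ᵐ v ∂(sphereMeasure n), ‖v‖ = 1 := by
  have := ae_restrict_mem (μ := μH[(n : ℝ) - 1])
    (Metric.isClosed_sphere (x := (0 : EuclideanSpace ℝ (Fin n))) (ε := 1)).measurableSet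
  filter_upwards [this] with v hv
  simpa [mem_sphere_zero_iff_norm] using hv

lemma moments {E' : Type*} [NormedAddCommGroup E'] (μ : Measure (Esp n))
    (hμ : ∀ᵐ v ∂μ, ‖v‖ = 1) (g : Esp n → E')
    (hg : Integrable g μ) (k : ℕ) : Integrable (fun v => ‖v‖ ^ k * ‖g v‖) μ := by
  apply hg.norm.congr
  filter_upwards [hμ] with v hv
  rw [hv]; simp




lemma hasSum_exp_mul (z c : ℂ) :
    HasSum (fun k : ℕ => z ^ k / (Nat.factorial k : ℂ) * c) (Complex.exp z * c) := by
  have := (NormedSpace.expSeries_div_hasSum_exp z).mul_right c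
  rwa [← Complex.exp_eq_exp_ℂ] at this

lemma analyticOnNhd (μ : Measure (Esp n)) (hμ : ∀ᵐ v ∂μ, ‖v‖ = 1) (f : Esp n → ℂ)
    (hf : Integrable f μ) :
    AnalyticOnNhd ℝ
      (VectorFourier.fourierIntegral Real.fourierChar μ (LL n).toLinearMap₁₂ f) Set.univ := by
  set L := LL n with hLdef
  intro w₀ _
  set P : FormalMultilinearSeries ℝ (Esp n) ℂ := fun k =>
    ((Nat.factorial k : ℝ))⁻¹ • (VectorFourier.fourierIntegral Real.fourierChar μ L.toLinearMap₁₂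
      (fun v => VectorFourier.fourierPowSMulRight L f v k) w₀) with hP
  have hIk : ∀ k : ℕ, Integrable (fun v => VectorFourier.fourierPowSMulRight L f v k) μ :=
    fun k => VectorFourier.integrable_fourierPowSMulRight L (moments μ hμ f hf k) hf.1
  have hnormP : ∀ k : ℕ, ‖P k‖ ≤ (2 * π * ‖L‖) ^ k / (Nat.factorial k) * ∫ v, ‖f v‖ ∂μ := by
    intro k
    rw [hP]
    calc ‖((Nat.factorial k : ℝ))⁻¹ • (VectorFourier.fourierIntegral Real.fourierChar μ
        L.toLinearMap₁₂ (fun v => VectorFourier.fourierPowSMulRight L f v k) w₀)‖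
        ≤ (Nat.factorial k : ℝ)⁻¹ * ∫ v, ‖VectorFourier.fourierPowSMulRight L f v k‖ ∂μ := by
          refine (norm_smul_le ((Nat.factorial k : ℝ))⁻¹ (VectorFourier.fourierIntegral Real.fourierChar μ
            L.toLinearMap₁₂ (fun v => VectorFourier.fourierPowSMulRight L f v k) w₀)).trans ?_
          rw [Real.norm_eq_abs, abs_of_nonneg (by positivity)]
          gcongr
          exact VectorFourier.norm_fourierIntegral_le_integral_norm _ _ _ _ _
      _ ≤ (Nat.factorial k : ℝ)⁻¹ * ∫ v, (2 * π * ‖L‖) ^ k * ‖f v‖ ∂μ := by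
          refine mul_le_mul_of_nonneg_left ?_ (by positivity)
          apply integral_mono_ae (hIk k).norm ((hf.norm.const_mul _))
          filter_upwards [hμ] with v hv
          have := VectorFourier.norm_fourierPowSMulRight_le L f v k
          rw [hv] at this
          simpa using this
      _ = (2 * π * ‖L‖) ^ k / (Nat.factorial k) * ∫ v, ‖f v‖ ∂μ := by
          rw [integral_const_mul]; ring
  have hball : HasFPowerSeriesOnBall
      (VectorFourier.fourierIntegral Real.fourierChar μ L.toLinearMap₁₂ f) P w₀ ⊤ := by
    constructor
    · rw [P.radius_eq_top_of_summable_norm]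
      intro r
      refine Summable.of_nonneg_of_le
        (f := fun k => (∫ v, ‖f v‖ ∂μ) * ((2 * π * ‖L‖ * r) ^ k / (Nat.factorial k)))
        (fun k => by positivity) (fun k => ?_)
        ((Real.summable_pow_div_factorial _).mul_left _)
      calc ‖P k‖ * (r : ℝ) ^ k
            ≤ ((2 * π * ‖L‖) ^ k / (Nat.factorial k) * ∫ v, ‖f v‖ ∂μ) * (r:ℝ) ^ k := by
              gcongr
              exact hnormP k
          _ = (∫ v, ‖f v‖ ∂μ) * ((2 * π * ‖L‖ * r) ^ k / (Nat.factorial k)) := by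
              rw [mul_pow]; ring
    · exact ENNReal.zero_lt_top
    · intro y _
      have hcy : Continuous fun v : Esp n => (((L v) y : ℝ) : ℂ) :=
        Complex.continuous_ofReal.comp (L.flip y).continuous
      have hcc : Continuous fun v : Esp n =>
          ((Real.fourierChar (-(L.toLinearMap₁₂ v w₀)) : Circle) : ℂ) := by
        apply continuous_subtype_val.comp
        exact Real.continuous_fourierChar.comp ((L.flip w₀).continuous.neg)
      set G : ℕ → Esp n → ℂ := fun k v =>
        (-(2 * π * Complex.I) * ((L v) y : ℝ)) ^ k / (Nat.factorial k : ℂ) *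
          ((Real.fourierChar (-(L.toLinearMap₁₂ v w₀)) : Circle) * f v) with hG
      have hkf : ∀ k : ℕ, ‖(Nat.factorial k : ℂ)‖ = (Nat.factorial k : ℝ) := by
        intro k; rw [Complex.norm_natCast]
      have hchar1 : ∀ v : Esp n,
          ‖((Real.fourierChar (-(L.toLinearMap₁₂ v w₀)) : Circle) : ℂ)‖ = 1 := by
        intro v; rw [Circle.norm_coe]
      have h2 : ∀ v : Esp n, ‖v‖ = 1 →
          ‖-(2 * (π:ℂ) * Complex.I) * (((L v) y : ℝ) : ℂ)‖ ≤ 2 * π * ‖L‖ * ‖y‖ := by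
        intro v hv
        have h4 : ‖-(2 * (π:ℂ) * Complex.I)‖ = 2 * π := by
          rw [norm_neg, norm_mul, Complex.norm_I, mul_one, norm_mul]
          simp [Complex.norm_real, Real.norm_eq_abs, abs_of_nonneg pi_nonneg]
        rw [norm_mul, h4]
        have h5 : ‖(((L v) y : ℝ) : ℂ)‖ = ‖(L v) y‖ := by
          rw [Complex.norm_real]
        rw [h5]
        have a2 : ‖L v‖ ≤ ‖L‖ := by
          have := L.le_opNorm v
          rwa [hv, mul_one] at this
        calc 2 * π * ‖(L v) y‖ ≤ 2 * π * (‖L v‖ * ‖y‖) := by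
              gcongr
              exact (L v).le_opNorm y
          _ ≤ 2 * π * (‖L‖ * ‖y‖) := by gcongr
          _ = 2 * π * ‖L‖ * ‖y‖ := by ring
      have hnormG : ∀ v, ‖v‖ = 1 → ∀ k : ℕ,
          ‖G k v‖ ≤ (2 * π * ‖L‖ * ‖y‖) ^ k / (Nat.factorial k) * ‖f v‖ := by
        intro v hv k
        rw [hG]
        simp only
        rw [norm_mul, norm_div, norm_pow, norm_mul _ (f v), hchar1 v, hkf k, one_mul]
        gcongr
        exact h2 v hv
      have hGint : ∀ k : ℕ, Integrable (G k) μ := by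
        intro k
        refine (hf.norm.const_mul ((2 * π * ‖L‖ * ‖y‖) ^ k / (Nat.factorial k))).mono' ?_ ?_
        · exact ((((continuous_const.mul hcy).pow k).div_const _).aestronglyMeasurable).mul
            (hcc.aestronglyMeasurable.mul hf.1)
        · filter_upwards [hμ] with v hv
          exact hnormG v hv k
      have hGsum : Summable fun k : ℕ => ∫ v, ‖G k v‖ ∂μ := by
        refine Summable.of_nonneg_of_le
          (f := fun k => ((2 * π * ‖L‖ * ‖y‖) ^ k / (Nat.factorial k)) * ∫ v, ‖f v‖ ∂μ)
          (fun k => integral_nonneg (fun v => norm_nonneg _)) (fun k => ?_)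
          (((Real.summable_pow_div_factorial _).mul_right _))
        show ∫ v, ‖G k v‖ ∂μ ≤
          ((2 * π * ‖L‖ * ‖y‖) ^ k / (Nat.factorial k)) * ∫ v, ‖f v‖ ∂μ
        rw [← integral_const_mul]
        apply integral_mono_ae (hGint k).norm (hf.norm.const_mul _)
        filter_upwards [hμ] with v hv
        exact hnormG v hv k
      have key := MeasureTheory.hasSum_integral_of_summable_integral_norm hGint hGsum
      have htsum : ∀ v : Esp n, (∑' k, G k v) =
          (Real.fourierChar (-(L.toLinearMap₁₂ v (w₀ + y))) : Circle) • f v := by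
        intro v
        have h1 : HasSum (fun k => G k v)
            (Complex.exp (-(2 * π * Complex.I) * ((L v) y : ℝ)) *
              ((Real.fourierChar (-(L.toLinearMap₁₂ v w₀)) : Circle) * f v)) :=
          hasSum_exp_mul _ _
        rw [h1.tsum_eq, Circle.smul_def, Real.fourierChar_apply, Real.fourierChar_apply]
        have hadd : (L.toLinearMap₁₂ v) (w₀ + y) = (L v) w₀ + (L v) y := by
          simp
        have hw : (L.toLinearMap₁₂ v) w₀ = (L v) w₀ := rfl
        rw [hadd, hw, ← mul_assoc, ← Complex.exp_add]
        congr 2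
        push_cast
        ring
      have hint2 : VectorFourier.fourierIntegral Real.fourierChar μ L.toLinearMap₁₂ f (w₀ + y) =
          ∫ v, ∑' k, G k v ∂μ := by
        rw [VectorFourier.fourierIntegral]
        exact integral_congr_ae (ae_of_all _ fun v => (htsum v).symm)
      rw [hint2]
      have hPk : ∀ k : ℕ, (P k fun _ => y) = ∫ v, G k v ∂μ := by
        intro k
        rw [hP]
        simp only [ContinuousMultilinearMap.smul_apply]
        rw [Real.fourierIntegral_continuousMultilinearMap_apply' (hIk k),
          VectorFourier.fourierIntegral, ← integral_smul]
        refine integral_congr_ae (ae_of_all _ fun v => ?_)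
        rw [hG]
        simp only [VectorFourier.fourierPowSMulRight_apply, Finset.prod_const,
          Finset.card_univ, Fintype.card_fin, Circle.smul_def, smul_eq_mul,
          Complex.real_smul, mul_pow]
        push_cast
        ring
      exact (funext hPk) ▸ key
  exact hball.analyticAt
lemma helmholtz (μ : Measure (Esp n)) (hμ : ∀ᵐ v ∂μ, ‖v‖ = 1) (f : Esp n → ℂ)
    (hf : Integrable f μ) (ξ : Esp n) :
    (∑ i : Fin n,
        fderiv ℝ (fun x => fderiv ℝ
          (VectorFourier.fourierIntegral Real.fourierChar μ (LL n).toLinearMap₁₂ f) x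
          (EuclideanSpace.single i 1)) ξ (EuclideanSpace.single i 1))
      + VectorFourier.fourierIntegral Real.fourierChar μ (LL n).toLinearMap₁₂ f ξ = 0 := by
  set L := LL n with hLdef
  set g := VectorFourier.fourierSMulRight L f with hgdef
  set g2 := VectorFourier.fourierSMulRight L g with hg2def
  have hf1 : Integrable (fun v => ‖v‖ * ‖f v‖) μ := by
    simpa using moments μ hμ f hf 1
  have hg_int : Integrable g μ := by
    refine (hf.norm.const_mul (2 * π * ‖L‖)).mono' (hf.1.fourierSMulRight (L := L)) ?_
    filter_upwards [hμ] with v hv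
    have := VectorFourier.norm_fourierSMulRight_le L f v
    rw [hv] at this
    simpa using this
  have hg1 : Integrable (fun v => ‖v‖ * ‖g v‖) μ := by
    simpa using moments μ hμ g hg_int 1
  have hg2_int : Integrable g2 μ := by
    refine (hg_int.norm.const_mul (2 * π * ‖L‖)).mono'
      ((hf.1.fourierSMulRight (L := L)).fourierSMulRight (L := L)) ?_
    filter_upwards [hμ] with v hv
    have := VectorFourier.norm_fourierSMulRight_le L g v
    rw [hv] at this
    simpa using this
  set Φ := VectorFourier.fourierIntegral Real.fourierChar μ L.toLinearMap₁₂ f with hΦ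
  set Φg := VectorFourier.fourierIntegral Real.fourierChar μ L.toLinearMap₁₂ g with hΦg
  set Φg2 := VectorFourier.fourierIntegral Real.fourierChar μ L.toLinearMap₁₂ g2 with hΦg2
  have hDF : ∀ x, HasFDerivAt Φ (Φg x) x := fun x =>
    VectorFourier.hasFDerivAt_fourierIntegral L hf hf1 x
  have hDG : ∀ x, HasFDerivAt Φg (Φg2 x) x := fun x =>
    VectorFourier.hasFDerivAt_fourierIntegral L hg_int hg1 x
  have hfd : fderiv ℝ Φ = Φg := funext fun x => (hDF x).fderiv
  -- second derivative applied
  have hsecond : ∀ i : Fin n,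
      fderiv ℝ (fun x => fderiv ℝ Φ x (EuclideanSpace.single i 1)) ξ (EuclideanSpace.single i 1)
        = (Φg2 ξ (EuclideanSpace.single i 1)) (EuclideanSpace.single i 1) := by
    intro i
    set e := (EuclideanSpace.single i 1 : Esp n)
    have heq : (fun x => fderiv ℝ Φ x e) = fun x => (ContinuousLinearMap.apply ℝ ℂ e) (Φg x) := by
      funext x; rw [hfd]; rfl
    have hD2 : HasFDerivAt (fun x => fderiv ℝ Φ x e)
        ((ContinuousLinearMap.apply ℝ ℂ e).comp (Φg2 ξ)) ξ := by
      rw [heq]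
      exact (ContinuousLinearMap.apply ℝ ℂ e).hasFDerivAt.comp ξ (hDG ξ)
    rw [hD2.fderiv]
    rfl
  -- express each term as an integral
  have happly : ∀ i : Fin n,
      (Φg2 ξ (EuclideanSpace.single i 1)) (EuclideanSpace.single i 1)
        = VectorFourier.fourierIntegral Real.fourierChar μ L.toLinearMap₁₂
            (fun v => g2 v (EuclideanSpace.single i 1) (EuclideanSpace.single i 1)) ξ := by
    intro i
    rw [hΦg2, Real.fourierIntegral_continuousLinearMap_apply' hg2_int,
      Real.fourierIntegral_continuousLinearMap_apply' (hg2_int.apply_continuousLinearMap _)]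
  -- pointwise value
  have hpt : ∀ (v : Esp n) (i : Fin n),
      g2 v (EuclideanSpace.single i 1) (EuclideanSpace.single i 1) = -(v i : ℂ) ^ 2 * f v := by
    intro v i
    have hc : (L v) (EuclideanSpace.single i 1) = (2 * π)⁻¹ * v i := by
      simp [hLdef, LL, EuclideanSpace.inner_single_right]
      rw [innerSL_apply_apply, EuclideanSpace.inner_single_right]
      simp
    rw [hg2def, hgdef]
    simp only [VectorFourier.fourierSMulRight_apply, ContinuousLinearMap.smul_apply,
      VectorFourier.fourierSMulRight_apply, hc, smul_eq_mul, Complex.real_smul]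
    have hπ : (π : ℂ) ≠ 0 := by exact_mod_cast pi_ne_zero
    push_cast
    field_simp
    ring_nf
    rw [Complex.I_sq]
    ring
  -- integrability of each term
  have hTint : ∀ i : Fin n, Integrable (fun v =>
      Real.fourierChar (-(L.toLinearMap₁₂ v ξ)) •
        (g2 v (EuclideanSpace.single i 1) (EuclideanSpace.single i 1))) μ := by
    intro i
    exact (VectorFourier.fourierIntegral_convergent_iff Real.continuous_fourierChar
      L.continuous₂ ξ).2 ((hg2_int.apply_continuousLinearMap _).apply_continuousLinearMap _)
  have hfint : Integrable (fun v => Real.fourierChar (-(L.toLinearMap₁₂ v ξ)) • f v) μ :=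
    (VectorFourier.fourierIntegral_convergent_iff Real.continuous_fourierChar
      L.continuous₂ ξ).2 hf
  -- sum of integrals
  calc (∑ i : Fin n,
        fderiv ℝ (fun x => fderiv ℝ Φ x (EuclideanSpace.single i 1)) ξ (EuclideanSpace.single i 1))
        + Φ ξ
      = (∑ i : Fin n, ∫ v, Real.fourierChar (-(L.toLinearMap₁₂ v ξ)) •
          (g2 v (EuclideanSpace.single i 1) (EuclideanSpace.single i 1)) ∂μ) + Φ ξ := by
        congr 1
        refine Finset.sum_congr rfl fun i _ => ?_
        rw [hsecond i, happly i]
        rfl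
    _ = (∫ v, ∑ i : Fin n, Real.fourierChar (-(L.toLinearMap₁₂ v ξ)) •
          (g2 v (EuclideanSpace.single i 1) (EuclideanSpace.single i 1)) ∂μ) + Φ ξ := by
        rw [integral_finset_sum _ (fun i _ => hTint i)]
    _ = (∫ v, -(Real.fourierChar (-(L.toLinearMap₁₂ v ξ)) • f v) ∂μ) + Φ ξ := by
        congr 1
        apply integral_congr_ae
        filter_upwards [hμ] with v hv
        have hsq : (∑ i, (v i : ℝ) ^ 2) = 1 := by
          have h1 : ‖v‖ ^ 2 = ∑ i, v i ^ 2 := by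
            rw [EuclideanSpace.norm_eq, Real.sq_sqrt (Finset.sum_nonneg fun i _ => by positivity)]
            congr 1; ext i; rw [Real.norm_eq_abs, sq_abs]
          rw [← h1, hv]; norm_num
        simp only [hpt v, Circle.smul_def, smul_eq_mul]
        rw [← Finset.mul_sum, ← Finset.sum_mul]
        have h2 : (∑ i : Fin n, -((v i : ℝ) : ℂ) ^ 2) = -1 := by
          rw [Finset.sum_neg_distrib]
          have h3 := congrArg Complex.ofReal hsq
          push_cast at h3
          rw [h3]
        rw [h2]; ring
    _ = 0 := by
        rw [integral_neg]
        have : Φ ξ = ∫ v, Real.fourierChar (-(L.toLinearMap₁₂ v ξ)) • f v ∂μ := rfl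
        rw [this]
        ring
end
end FourierSphereHelmholtz

/-- The Fourier transform `F` of a measure `f dσ` on the unit sphere is smooth and
satisfies the Helmholtz equation `ΔF + F = 0`. -/
theorem fourier_sphere_helmholtz (n : ℕ) (hn : 2 ≤ n)
    (f : EuclideanSpace ℝ (Fin n) → ℂ) (hf : Integrable f (sphereMeasure n))
    (F : EuclideanSpace ℝ (Fin n) → ℂ)
    (hF : F = fun ξ =>
      ∫ η, Complex.exp (-Complex.I * ((inner ℝ ξ η : ℝ) : ℂ)) * f η ∂(sphereMeasure n)) :
    ContDiff ℝ (⊤ : ℕ∞) F ∧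
    ∀ ξ : EuclideanSpace ℝ (Fin n),
      (∑ i : Fin n,
        fderiv ℝ (fun x => fderiv ℝ F x (EuclideanSpace.single i 1)) ξ
          (EuclideanSpace.single i 1)) + F ξ = 0 := by
  have hμ := FourierSphereHelmholtz.sphere_ae n
  have hFeq : F = VectorFourier.fourierIntegral Real.fourierChar (sphereMeasure n)
      (FourierSphereHelmholtz.LL n).toLinearMap₁₂ f := by
    rw [hF]
    funext ξ
    exact (FourierSphereHelmholtz.ft_eq (sphereMeasure n) f ξ).symm
  constructor
  · rw [hFeq]
    exact (FourierSphereHelmholtz.analyticOnNhd (sphereMeasure n) hμ f hf).contDiff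
  · intro ξ
    rw [hFeq]
    exact FourierSphereHelmholtz.helmholtz (sphereMeasure n) hμ f hf ξ
end

section
/- Let n ≥ 2 and f ∈ L¹(σ), and define F : ℝⁿ → ℂ by F(ξ) = ∫_{S^{n-1}} exp(-i ⟪ξ, η⟫) f(η) dσ(η). Then for every x ∈ ℝⁿ, F(x) = 0 if and only if for every r > 0 the integral of F over the sphere {y ∈ ℝⁿ : ‖y - x‖ = r} with respect to the (n-1)-dimensional Hausdorff measure restricted to that sphere equals 0. -/
/-!
Write `σ̂_r(ξ) = ∫_{‖z‖ = r} exp(-i⟪z, ξ⟫) dσ(z)` for the Fourier transform of the surface measure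
of the sphere of radius `r`. The integral of `exp(-i⟪·, ξ⟫)` over the sphere of radius `r` around
`x` is `exp(-i⟪x, ξ⟫) σ̂_r(ξ)`, and reflections show that `σ̂_r(ξ)` depends only on `‖ξ‖`. By
Fubini, the integral of `F` over that sphere is therefore `σ̂_r(η₀) F(x)` for any unit vector `η₀`.
So it remains to see `σ̂_1(η₀) ≠ 0`: on the unit sphere `|⟪z, η₀⟫| ≤ 1 < π / 2`, so its real part
is at least `cos 1 · σ(S^{n-1}) > 0`. That the surface measure of a sphere is finite and positive
follows from the orthogonal projection onto a hyperplane, which is bi-Lipschitz on each open cap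
around the normal direction (finitely many caps cover the compact sphere) and maps the sphere onto
a ball.
-/

open MeasureTheory

open Metric Module Set
open scoped RealInnerProductSpace

lemma integral_restrict_image_isometryEquiv {X Y G : Type*} [MetricSpace X] [MeasurableSpace X]
    [BorelSpace X] [MetricSpace Y] [MeasurableSpace Y] [BorelSpace Y] [NormedAddCommGroup G]
    [NormedSpace ℝ G] (e : X ≃ᵢ Y) (d : ℝ) (s : Set X) (g : Y → G) :
    ∫ y, g y ∂(μH[d].restrict (e '' s)) = ∫ x, g (e x) ∂(μH[d].restrict s) := by
  have he := e.toHomeomorph.measurableEmbedding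
  exact (((e.measurePreserving_hausdorffMeasure d).restrict_image_emb he s).integral_comp he g).symm

lemma hausdorffMeasure_sphere_eq_sphere_zero {E : Type*} [NormedAddCommGroup E] [MeasurableSpace E]
    [BorelSpace E] (d : ℝ) (x : E) (r : ℝ) : μH[d] (sphere x r) = μH[d] (sphere (0 : E) r) := by
  rw [← (IsometryEquiv.addLeft x).hausdorffMeasure_image d (sphere 0 r),
    IsometryEquiv.image_sphere, IsometryEquiv.addLeft_apply, add_zero]

section SphereMeasure

variable {E : Type*} [NormedAddCommGroup E] [InnerProductSpace ℝ E] {v : E}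

lemma norm_sq_eq_norm_sq_orthogonalProjectionOnto_add_inner_sq (hv : ‖v‖ = 1) (y : E) :
    ‖y‖ ^ 2 = ‖(ℝ ∙ v)ᗮ.orthogonalProjectionOnto y‖ ^ 2 + ⟪v, y⟫ ^ 2 := by
  rw [Submodule.norm_sq_eq_add_norm_sq_starProjection y (ℝ ∙ v),
    Submodule.starProjection_unit_singleton ℝ hv, norm_smul, hv, mul_one, Real.norm_eq_abs,
    sq_abs, add_comm]
  rfl

lemma norm_sub_le_of_mem_cap (hv : ‖v‖ = 1) {r : ℝ} {y z : E} (hy : ‖y‖ = r) (hz : ‖z‖ = r)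
    (hyv : r / 2 < ⟪v, y⟫) (hzv : r / 2 < ⟪v, z⟫) :
    ‖y - z‖ ≤ 3 * ‖(ℝ ∙ v)ᗮ.orthogonalProjectionOnto y - (ℝ ∙ v)ᗮ.orthogonalProjectionOnto z‖ := by
  have hyz := norm_sq_eq_norm_sq_orthogonalProjectionOnto_add_inner_sq hv (y - z)
  have hy2 := norm_sq_eq_norm_sq_orthogonalProjectionOnto_add_inner_sq hv y
  have hz2 := norm_sq_eq_norm_sq_orthogonalProjectionOnto_add_inner_sq hv z
  have hPy := Submodule.norm_orthogonalProjectionOnto_apply_le (ℝ ∙ v)ᗮ y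
  have hPz := Submodule.norm_orthogonalProjectionOnto_apply_le (ℝ ∙ v)ᗮ z
  rw [map_sub, inner_sub_right] at hyz
  set P := (ℝ ∙ v)ᗮ.orthogonalProjectionOnto
  have hr : 0 ≤ r := hy ▸ norm_nonneg y
  have hD : |‖P y‖ - ‖P z‖| ≤ ‖P y - P z‖ := abs_norm_sub_norm_le _ _
  -- `(⟪v, y⟫ - ⟪v, z⟫) (⟪v, y⟫ + ⟪v, z⟫) = ‖P z‖² - ‖P y‖²`, and `⟪v, y⟫ + ⟪v, z⟫ > r`
  -- while `‖P y‖ + ‖P z‖ ≤ 2 r`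
  have hinner : |⟪v, y⟫ - ⟪v, z⟫| ≤ 2 * ‖P y - P z‖ := by
    have hprod : |⟪v, y⟫ - ⟪v, z⟫| * (⟪v, y⟫ + ⟪v, z⟫) = |‖P y‖ - ‖P z‖| * (‖P y‖ + ‖P z‖) := by
      rw [← abs_of_pos (by linarith : 0 < ⟪v, y⟫ + ⟪v, z⟫),
        ← abs_of_nonneg (by positivity : 0 ≤ ‖P y‖ + ‖P z‖), ← abs_mul, ← abs_mul, ← abs_neg]
      congr 1
      nlinarith
    have hbound : |‖P y‖ - ‖P z‖| * (‖P y‖ + ‖P z‖) ≤ ‖P y - P z‖ * (2 * r) :=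
      mul_le_mul hD (by linarith) (by positivity) (norm_nonneg _)
    nlinarith [abs_nonneg (⟪v, y⟫ - ⟪v, z⟫), norm_nonneg (P y - P z)]
  nlinarith [abs_nonneg (⟪v, y⟫ - ⟪v, z⟫), sq_abs (⟪v, y⟫ - ⟪v, z⟫), norm_nonneg (y - z),
    norm_nonneg (P y - P z)]

lemma closedBall_subset_image_orthogonalProjectionOnto_sphere (hv : ‖v‖ = 1) (r : ℝ) :
    closedBall (0 : (ℝ ∙ v)ᗮ) r ⊆ (ℝ ∙ v)ᗮ.orthogonalProjectionOnto '' sphere (0 : E) r := by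
  intro w hw
  rw [mem_closedBall_zero_iff] at hw
  set y : E := w + √(r ^ 2 - ‖w‖ ^ 2) • v
  have hPy : (ℝ ∙ v)ᗮ.orthogonalProjectionOnto y = w := by
    simp [y, Submodule.orthogonalProjectionOnto_orthogonalComplement_singleton_eq_zero]
  have hvy : ⟪v, y⟫ = √(r ^ 2 - ‖w‖ ^ 2) := by
    simp [y, inner_add_right, inner_smul_right, hv,
      Submodule.mem_orthogonal_singleton_iff_inner_right.1 w.2]
  refine ⟨y, mem_sphere_zero_iff_norm.2 ?_, hPy⟩
  have hy := norm_sq_eq_norm_sq_orthogonalProjectionOnto_add_inner_sq hv y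
  rw [hPy, hvy, Real.sq_sqrt (by nlinarith [norm_nonneg w]), Submodule.coe_norm] at hy
  nlinarith [norm_nonneg y, norm_nonneg w]

variable [FiniteDimensional ℝ E]

lemma finrank_orthogonal_span_singleton_eq_sub_one (hv : v ≠ 0) :
    (finrank ℝ (ℝ ∙ v)ᗮ : ℝ) = finrank ℝ E - 1 := by
  rw [← Submodule.finrank_add_finrank_orthogonal (ℝ ∙ v), finrank_span_singleton hv]
  push_cast
  ring

variable [MeasurableSpace E] [BorelSpace E]

lemma hausdorffMeasure_sphere_inter_cap_lt_top (hv : ‖v‖ = 1) (r : ℝ) :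
    μH[(finrank ℝ E : ℝ) - 1] (sphere (0 : E) r ∩ {y | r / 2 < ⟪v, y⟫}) < ⊤ := by
  set C := sphere (0 : E) r ∩ {y | r / 2 < ⟪v, y⟫}
  set K := (ℝ ∙ v)ᗮ
  rw [← finrank_orthogonal_span_singleton_eq_sub_one (norm_ne_zero_iff.1 (hv ▸ one_ne_zero))]
  set p : C → K := fun y => K.orthogonalProjectionOnto y
  have hp : AntilipschitzWith 3 p := by
    refine AntilipschitzWith.of_le_mul_dist fun y z => ?_
    rw [Subtype.dist_eq, dist_eq_norm, dist_eq_norm, NNReal.coe_ofNat]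
    exact norm_sub_le_of_mem_cap hv (mem_sphere_zero_iff_norm.1 y.2.1)
      (mem_sphere_zero_iff_norm.1 z.2.1) y.2.2 z.2.2
  have hrange : range p ⊆ closedBall 0 r := by
    rintro _ ⟨y, rfl⟩
    rw [mem_closedBall_zero_iff, ← mem_sphere_zero_iff_norm.1 y.2.1]
    exact K.norm_orthogonalProjectionOnto_apply_le y
  calc μH[finrank ℝ K] C = μH[finrank ℝ K] (univ : Set C) := by
        have := (isometry_subtype_coe (s := C)).hausdorffMeasure_image
          (Or.inl (Nat.cast_nonneg (finrank ℝ K))) univ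
        rwa [image_univ, Subtype.range_coe] at this
    _ ≤ 3 ^ (finrank ℝ K : ℝ) * μH[finrank ℝ K] (range p) := by
        simpa using hp.le_hausdorffMeasure_image (Nat.cast_nonneg _) univ
    _ ≤ 3 ^ (finrank ℝ K : ℝ) * μH[finrank ℝ K] (closedBall (0 : K) r) := by
        gcongr
    _ < ⊤ := ENNReal.mul_lt_top (by simp) measure_closedBall_lt_top

lemma hausdorffMeasure_sphere_lt_top (x : E) {r : ℝ} (hr : 0 < r) :
    μH[(finrank ℝ E : ℝ) - 1] (sphere x r) < ⊤ := by
  rw [hausdorffMeasure_sphere_eq_sphere_zero]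
  obtain ⟨t, ht⟩ := (isCompact_sphere (0 : E) r).elim_finite_subcover
    (fun v : sphere (0 : E) 1 => {y | r / 2 < ⟪(v : E), y⟫})
    (fun v => isOpen_lt continuous_const (continuous_const.inner continuous_id)) fun y hy => by
      rw [mem_sphere_zero_iff_norm] at hy
      refine mem_iUnion.2 ⟨⟨r⁻¹ • y, ?_⟩, ?_⟩
      · simp [norm_smul, hy, abs_of_pos hr, hr.ne']
      · rw [mem_ofPred_eq, real_inner_smul_left, real_inner_self_eq_norm_sq, hy, sq,
          inv_mul_cancel_left₀ hr.ne']
        linarith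
  calc μH[(finrank ℝ E : ℝ) - 1] (sphere (0 : E) r)
      ≤ μH[(finrank ℝ E : ℝ) - 1] (⋃ v ∈ t, sphere (0 : E) r ∩ {y | r / 2 < ⟪(v : E), y⟫}) :=
        measure_mono fun y hy => by simpa [mem_sphere_zero_iff_norm.1 hy] using ht hy
    _ ≤ ∑ v ∈ t, μH[(finrank ℝ E : ℝ) - 1] (sphere (0 : E) r ∩ {y | r / 2 < ⟪(v : E), y⟫}) :=
        measure_biUnion_finset_le _ _
    _ < ⊤ := ENNReal.sum_lt_top.2 fun v _ =>
        hausdorffMeasure_sphere_inter_cap_lt_top (mem_sphere_zero_iff_norm.1 v.2) r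

lemma hausdorffMeasure_sphere_pos [Nontrivial E] (x : E) {r : ℝ} (hr : 0 < r) :
    0 < μH[(finrank ℝ E : ℝ) - 1] (sphere x r) := by
  rw [hausdorffMeasure_sphere_eq_sphere_zero]
  obtain ⟨v, hv⟩ := exists_norm_eq E zero_le_one
  rw [← finrank_orthogonal_span_singleton_eq_sub_one (norm_ne_zero_iff.1 (hv ▸ one_ne_zero))]
  set K := (ℝ ∙ v)ᗮ
  calc 0 < μH[finrank ℝ K] (closedBall (0 : K) r) := measure_closedBall_pos _ _ hr
    _ ≤ μH[finrank ℝ K] (K.orthogonalProjectionOnto '' sphere (0 : E) r) :=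
        measure_mono (closedBall_subset_image_orthogonalProjectionOnto_sphere hv r)
    _ ≤ μH[finrank ℝ K] (sphere (0 : E) r) := by
        simpa using K.lipschitzWith_orthogonalProjectionOnto.hausdorffMeasure_image_le
          (Nat.cast_nonneg _) (sphere (0 : E) r)

end SphereMeasure

lemma re_integral_exp_neg_I_mul_pos {α : Type*} [MeasurableSpace α] {ν : Measure α}
    [IsFiniteMeasure ν] [NeZero ν] {t : α → ℝ} (ht : AEMeasurable t ν)
    (hle : ∀ᵐ a ∂ν, |t a| ≤ 1) : 0 < (∫ a, Complex.exp (-Complex.I * t a) ∂ν).re := by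
  have hint : Integrable (fun a => Complex.exp (-Complex.I * t a)) ν :=
    Integrable.of_bound (by fun_prop) 1 (ae_of_all _ fun a => by simp [Complex.norm_exp])
  have hcos : ∀ᵐ a ∂ν, Real.cos 1 ≤ Real.cos (t a) := by
    filter_upwards [hle] with a ha
    rw [← Real.cos_abs (t a)]
    exact Real.cos_le_cos_of_nonneg_of_le_pi (abs_nonneg _) (by linarith [Real.pi_gt_three]) ha
  have hcos1 : 0 < Real.cos 1 :=
    Real.cos_pos_of_mem_Ioo ⟨by linarith [Real.pi_gt_three], by linarith [Real.pi_gt_three]⟩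
  calc 0 < ∫ _, Real.cos 1 ∂ν := by
        rw [integral_const, smul_eq_mul]
        exact mul_pos measureReal_univ_pos hcos1
    _ ≤ ∫ a, Real.cos (t a) ∂ν :=
        integral_mono_ae (integrable_const _)
          (hint.re.congr (ae_of_all _ fun a => by simp [Complex.exp_re])) hcos
    _ = (∫ a, Complex.exp (-Complex.I * t a) ∂ν).re := by
        rw [← RCLike.re_to_complex, ← integral_re hint]
        simp [Complex.exp_re]

section SphereFourier

variable {E : Type*} [NormedAddCommGroup E] [InnerProductSpace ℝ E] [MeasurableSpace E]
  [BorelSpace E]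

noncomputable def sphereFourier (d r : ℝ) (ξ : E) : ℂ :=
  ∫ z, Complex.exp (-Complex.I * ⟪z, ξ⟫) ∂(μH[d].restrict (sphere (0 : E) r))

lemma integral_exp_inner_restrict_sphere (d : ℝ) (x ξ : E) (r : ℝ) :
    ∫ y, Complex.exp (-Complex.I * ⟪y, ξ⟫) ∂(μH[d].restrict (sphere x r)) =
      Complex.exp (-Complex.I * ⟪x, ξ⟫) * sphereFourier d r ξ := by
  have hsphere : sphere x r = IsometryEquiv.addLeft x '' sphere 0 r := by
    rw [IsometryEquiv.image_sphere, IsometryEquiv.addLeft_apply, add_zero]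
  rw [hsphere, integral_restrict_image_isometryEquiv, sphereFourier, ← integral_const_mul]
  congr 1
  ext z
  rw [IsometryEquiv.addLeft_apply, inner_add_left, ← Complex.exp_add]
  push_cast
  ring_nf

lemma sphereFourier_eq_of_norm_eq {ξ ξ' : E} (h : ‖ξ‖ = ‖ξ'‖) (d r : ℝ) :
    sphereFourier d r ξ = sphereFourier d r ξ' := by
  set L := (ℝ ∙ (ξ' - ξ))ᗮ.reflection
  have hL : L ξ' = ξ := Submodule.reflection_sub h.symm
  have hsphere : sphere (0 : E) r = L.toIsometryEquiv '' sphere 0 r := by simp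
  rw [sphereFourier, hsphere, integral_restrict_image_isometryEquiv, sphereFourier]
  congr 1
  ext z
  rw [LinearIsometryEquiv.coe_toIsometryEquiv, ← hL, LinearIsometryEquiv.inner_map_map]

lemma sphereFourier_ne_zero {d r : ℝ} {ξ : E} (h0 : μH[d] (sphere (0 : E) r) ≠ 0)
    (htop : μH[d] (sphere (0 : E) r) ≠ ⊤) (hξ : r * ‖ξ‖ ≤ 1) : sphereFourier d r ξ ≠ 0 := by
  have : IsFiniteMeasure (μH[d].restrict (sphere (0 : E) r)) := isFiniteMeasure_restrict.2 htop
  have : NeZero (μH[d].restrict (sphere (0 : E) r)) := ⟨by rwa [Ne, Measure.restrict_eq_zero]⟩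
  have hle : ∀ᵐ z ∂(μH[d].restrict (sphere (0 : E) r)), |⟪z, ξ⟫| ≤ 1 := by
    filter_upwards [ae_restrict_mem isClosed_sphere.measurableSet] with z hz
    calc |⟪z, ξ⟫| ≤ ‖z‖ * ‖ξ‖ := abs_real_inner_le_norm z ξ
      _ = r * ‖ξ‖ := by rw [mem_sphere_zero_iff_norm.1 hz]
      _ ≤ 1 := hξ
  intro h
  have hpos := re_integral_exp_neg_I_mul_pos (by fun_prop) hle
  rw [← sphereFourier, h, Complex.zero_re] at hpos
  exact hpos.false

variable [SecondCountableTopology E]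

lemma integral_integral_exp_inner_mul_swap {μ ν : Measure E} [SFinite μ] [IsFiniteMeasure ν]
    {f : E → ℂ} (hf : Integrable f μ) :
    ∫ y, (∫ η, Complex.exp (-Complex.I * ⟪y, η⟫) * f η ∂μ) ∂ν =
      ∫ η, (∫ y, Complex.exp (-Complex.I * ⟪y, η⟫) ∂ν) * f η ∂μ := by
  have hint : Integrable (fun p : E × E => Complex.exp (-Complex.I * ⟪p.1, p.2⟫) * f p.2)
      (ν.prod μ) :=
    (hf.comp_snd ν).bdd_mul (c := 1) (by fun_prop)
      (ae_of_all _ fun p => by simp [Complex.norm_exp])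
  rw [integral_integral_swap hint]
  simp_rw [integral_mul_const]

lemma integral_fourier_restrict_sphere_eq_sphereFourier_mul {μ : Measure E} [SFinite μ]
    {f : E → ℂ} (hf : Integrable f μ) {η₀ : E} (hμ : ∀ᵐ η ∂μ, ‖η‖ = ‖η₀‖) (x : E) {d r : ℝ}
    (hr : μH[d] (sphere x r) ≠ ⊤) :
    ∫ y, (∫ η, Complex.exp (-Complex.I * ⟪y, η⟫) * f η ∂μ) ∂(μH[d].restrict (sphere x r)) =
      sphereFourier d r η₀ * ∫ η, Complex.exp (-Complex.I * ⟪x, η⟫) * f η ∂μ := by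
  have : IsFiniteMeasure (μH[d].restrict (sphere x r)) := isFiniteMeasure_restrict.2 hr
  rw [integral_integral_exp_inner_mul_swap hf, ← integral_const_mul]
  refine integral_congr_ae ?_
  filter_upwards [hμ] with η hη
  rw [integral_exp_inner_restrict_sphere, sphereFourier_eq_of_norm_eq hη]
  ring

end SphereFourier

/-- The Fourier transform `F` of a measure `f dσ` on the unit sphere vanishes at a
point `x` if and only if all of its spherical means around `x` vanish. -/
theorem fourier_sphere_zero_iff_spherical_means_zero (n : ℕ) (hn : 2 ≤ n)
    (f : EuclideanSpace ℝ (Fin n) → ℂ) (hf : Integrable f (sphereMeasure n))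
    (F : EuclideanSpace ℝ (Fin n) → ℂ)
    (hF : F = fun ξ =>
      ∫ η, Complex.exp (-Complex.I * ((inner ℝ ξ η : ℝ) : ℂ)) * f η ∂(sphereMeasure n)) :
    ∀ x : EuclideanSpace ℝ (Fin n),
      F x = 0 ↔ ∀ r : ℝ, 0 < r →
        ∫ y, F y ∂((μH[(n : ℝ) - 1]).restrict (Metric.sphere x r)) = 0 := by
  intro x
  have : NeZero n := ⟨by omega⟩
  have hdim : (finrank ℝ (EuclideanSpace ℝ (Fin n)) : ℝ) - 1 = n - 1 := by simp
  have hfin (y : EuclideanSpace ℝ (Fin n)) {r : ℝ} (hr : 0 < r) :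
      μH[(n : ℝ) - 1] (sphere y r) ≠ ⊤ :=
    hdim ▸ (hausdorffMeasure_sphere_lt_top y hr).ne
  have : IsFiniteMeasure (sphereMeasure n) := isFiniteMeasure_restrict.2 (hfin 0 one_pos)
  obtain ⟨η₀, hη₀⟩ := exists_norm_eq (EuclideanSpace ℝ (Fin n)) zero_le_one
  have hσ : ∀ᵐ η ∂(sphereMeasure n), ‖η‖ = ‖η₀‖ := by
    filter_upwards [ae_restrict_mem isClosed_sphere.measurableSet] with η hη
    rwa [hη₀, ← mem_sphere_zero_iff_norm]
  have hmean (r : ℝ) (hr : 0 < r) :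
      ∫ y, F y ∂(μH[(n : ℝ) - 1].restrict (sphere x r)) =
        sphereFourier ((n : ℝ) - 1) r η₀ * F x := by
    subst hF
    exact integral_fourier_restrict_sphere_eq_sphereFourier_mul hf hσ x (hfin x hr)
  have hne : sphereFourier ((n : ℝ) - 1) 1 η₀ ≠ 0 :=
    sphereFourier_ne_zero (hdim ▸ (hausdorffMeasure_sphere_pos 0 one_pos).ne') (hfin 0 one_pos)
      (by rw [hη₀, one_mul])
  refine ⟨fun h r hr => by rw [hmean r hr, h, mul_zero], fun h => ?_⟩
  simpa [hmean 1 one_pos, hne] using h 1 one_pos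
end
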